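/- arXiv:2405.14454 — 5 statements merged into one kernel-verified Lean document; each statement's English description precedes it below -/
import Mathlib

section
/- Let S = (s_i)_{i∈ℤ} be a doubly infinite sequence over a field K, and for m ≥ 0 let W_{m,n} = det(T_S(n,m)) where T_S(n,m) = (s_{i-j+n})_{0≤i,j≤m} is the (m+1)×(m+1) Toeplitz matrix. Then for all m ≥ 1 and n ∈ ℤ, the Desnanot–Jacobi (Dodgson condensation) identity holds: W_{m,n} · W_{m-2,n} = W_{m-1,n}² − W_{m-1,n-1} · W_{m-1,n+1}, where W_{-1,n} = 1 and W_{-2,n} = 0 by convention. -/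
namespace DJaux

open Matrix

/-- Equivalence putting the two "corner" indices `0` and `k+1` first. -/
def e2 (k : ℕ) : Fin 2 ⊕ Fin k ≃ Fin (k + 2) where
  toFun x := Sum.elim (fun p : Fin 2 => if p = 0 then (0 : Fin (k+2)) else Fin.last (k+1))
    (fun i : Fin k => ⟨i + 1, by omega⟩) x
  invFun j :=
    if h0 : (j : ℕ) = 0 then Sum.inl 0
    else if h1 : (j : ℕ) = k + 1 then Sum.inl 1
    else Sum.inr ⟨(j : ℕ) - 1, by have := j.isLt; omega⟩
  left_inv := by
    rintro (p | i)
    · fin_cases p <;> simp [Fin.ext_iff, Fin.last, -Fin.val_eq_zero_iff]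
    · have hi := i.isLt
      simp only [Sum.elim_inr]
      beta_reduce
      split_ifs with ha hb
      · omega
      simp
      omega
  right_inv := by
    intro j
    have := j.isLt
    beta_reduce
    by_cases h0 : (j : ℕ) = 0
    · rw [dif_pos h0]
      exact Fin.ext (by simp; omega)
    · by_cases h1 : (j : ℕ) = k + 1
      · rw [dif_neg h0, dif_pos h1]
        simp only [Sum.elim_inl, if_neg (by decide : (1 : Fin 2) ≠ 0)]
        exact Fin.ext (by simp [Fin.last]; omega)
      · rw [dif_neg h0, dif_neg h1]
        simp only [Sum.elim_inr]
        exact Fin.ext (by simp; omega)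

/-- For `p = 0`: corner first; for `p = 1`: corner last. -/
def f1 (k : ℕ) : Fin 2 → (Fin 1 ⊕ Fin k ≃ Fin (k + 1))
  | 0 =>
    { toFun := Sum.elim (fun _ => (0 : Fin (k+1))) (fun i => ⟨i + 1, by omega⟩)
      invFun := fun j => if h0 : (j : ℕ) = 0 then Sum.inl 0
        else Sum.inr ⟨(j : ℕ) - 1, by have := j.isLt; omega⟩
      left_inv := by
        rintro (p | i)
        · have : p = 0 := Subsingleton.elim p 0
          subst this
          simp
        · have hi := i.isLt
          simp only [Sum.elim_inr]
          beta_reduce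
          split_ifs with ha
          · omega
          simp
      right_inv := by
        intro j
        have := j.isLt
        beta_reduce
        by_cases h0 : (j : ℕ) = 0
        · rw [dif_pos h0]
          exact Fin.ext (by simp; omega)
        · rw [dif_neg h0]
          exact Fin.ext (by simp; omega) }
  | 1 =>
    { toFun := Sum.elim (fun _ => Fin.last k) (fun i => ⟨i, by omega⟩)
      invFun := fun j => if h0 : (j : ℕ) = k then Sum.inl 0
        else Sum.inr ⟨(j : ℕ), by have := j.isLt; omega⟩
      left_inv := by
        rintro (p | i)
        · have : p = 0 := Subsingleton.elim p 0
          subst this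
          simp [Fin.last]
        · have hi := i.isLt
          simp only [Sum.elim_inr]
          beta_reduce
          split_ifs with ha
          · omega
          exact dif_neg ha
      right_inv := by
        intro j
        have := j.isLt
        beta_reduce
        by_cases h0 : (j : ℕ) = k
        · rw [dif_pos h0]
          exact Fin.ext (by simp [Fin.last]; omega)
        · rw [dif_neg h0]
          rfl }

def emb (k : ℕ) : Fin 2 → Fin (k + 1) → Fin (k + 2)
  | 0 => Fin.castSucc
  | 1 => Fin.succ

lemma emb_f1_inl (k : ℕ) (p : Fin 2) (a : Fin 1) :
    emb k p (f1 k p (Sum.inl a)) = e2 k (Sum.inl p) := by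
  fin_cases p <;> fin_cases a <;>
    simp [emb, f1, e2, Fin.ext_iff, Fin.last, Equiv.coe_fn_mk, -Fin.val_eq_zero_iff]

lemma emb_f1_inr (k : ℕ) (p : Fin 2) (i : Fin k) :
    emb k p (f1 k p (Sum.inr i)) = e2 k (Sum.inr i) := by
  fin_cases p <;> simp [emb, f1, e2, Fin.ext_iff, Fin.last, Equiv.coe_fn_mk, -Fin.val_eq_zero_iff]

end DJaux

namespace DJaux

open Matrix Equiv

variable {F : Type*} [Field F] {k : ℕ}

def corn (A : Matrix (Fin (k+2)) (Fin (k+2)) F) : Matrix (Fin 2) (Fin 2) F :=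
  Matrix.of fun a b => A (e2 k (.inl a)) (e2 k (.inl b))

def qb (A : Matrix (Fin (k+2)) (Fin (k+2)) F) : Matrix (Fin 2) (Fin k) F :=
  Matrix.of fun a j => A (e2 k (.inl a)) (e2 k (.inr j))

def rb (A : Matrix (Fin (k+2)) (Fin (k+2)) F) : Matrix (Fin k) (Fin 2) F :=
  Matrix.of fun i b => A (e2 k (.inr i)) (e2 k (.inl b))

def sb (A : Matrix (Fin (k+2)) (Fin (k+2)) F) : Matrix (Fin k) (Fin k) F :=
  Matrix.of fun i j => A (e2 k (.inr i)) (e2 k (.inr j))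

def mino (A : Matrix (Fin (k+2)) (Fin (k+2)) F) (p q : Fin 2) :
    Matrix (Fin (k+1)) (Fin (k+1)) F :=
  Matrix.of fun i j => A (emb k p i) (emb k q j)

lemma hA_blocks (A : Matrix (Fin (k+2)) (Fin (k+2)) F) :
    A.submatrix (e2 k) (e2 k) = fromBlocks (corn A) (qb A) (rb A) (sb A) := by
  ext i j
  rcases i with i | i <;> rcases j with j | j <;> rfl

lemma mino_blocks (A : Matrix (Fin (k+2)) (Fin (k+2)) F) (p q : Fin 2) :
    (mino A p q).submatrix (f1 k p) (f1 k q) =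
      fromBlocks (Matrix.of fun _ _ : Fin 1 => corn A p q)
        (Matrix.of fun (_ : Fin 1) j => qb A p j)
        (Matrix.of fun i (_ : Fin 1) => rb A i q) (sb A) := by
  ext i j
  rcases i with a | i <;> rcases j with b | j <;>
    simp [mino, corn, qb, rb, sb, fromBlocks, emb_f1_inl, emb_f1_inr]

lemma entry_mul (Q : Matrix (Fin 2) (Fin k) F) (B : Matrix (Fin k) (Fin k) F)
    (Rm : Matrix (Fin k) (Fin 2) F) (p q : Fin 2) :
    ((Matrix.of fun (_ : Fin 1) j => Q p j) * B * (Matrix.of fun i (_ : Fin 1) => Rm i q)) 0 0 =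
      (Q * B * Rm) p q := by
  simp [Matrix.mul_apply]

theorem dj (A : Matrix (Fin (k+2)) (Fin (k+2)) F) (hS : (sb A).det ≠ 0) :
    A.det * (sb A).det =
      (mino A 0 0).det * (mino A 1 1).det - (mino A 0 1).det * (mino A 1 0).det := by
  classical
  haveI : Invertible (sb A) := (sb A).invertibleOfIsUnitDet (isUnit_iff_ne_zero.2 hS)
  have h1 : A.det = (sb A).det * (corn A - qb A * ⅟(sb A) * rb A).det := by
    rw [← det_submatrix_equiv_self (e2 k) A, hA_blocks, det_fromBlocks₂₂]
  have hminor : ∀ p q : Fin 2, ((mino A p q).submatrix (f1 k p) (f1 k q)).det =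
      (sb A).det * (corn A - qb A * ⅟(sb A) * rb A) p q := by
    intro p q
    rw [mino_blocks, det_fromBlocks₂₂, det_fin_one]
    simp [entry_mul, Matrix.sub_apply]
  have hdiag : ∀ p : Fin 2, ((mino A p p).submatrix (f1 k p) (f1 k p)).det = (mino A p p).det :=
    fun p => det_submatrix_equiv_self _ _
  -- off-diagonal minors: dets agree up to a common sign, which cancels in the product
  have hoff : ((mino A 0 1).submatrix (f1 k 0) (f1 k 1)).det *
      ((mino A 1 0).submatrix (f1 k 1) (f1 k 0)).det =
      (mino A 0 1).det * (mino A 1 0).det := by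
    set σ : Equiv.Perm (Fin 1 ⊕ Fin k) := (f1 k 1).trans (f1 k 0).symm with hσ
    have h01 : (mino A 0 1).submatrix (f1 k 0) (f1 k 1) =
        ((mino A 0 1).submatrix (f1 k 0) (f1 k 0)).submatrix id σ := by
      ext i j; simp [hσ]
    have h10 : (mino A 1 0).submatrix (f1 k 1) (f1 k 0) =
        ((mino A 1 0).submatrix (f1 k 1) (f1 k 1)).submatrix id σ.symm := by
      ext i j; simp [hσ]
    rw [h01, h10, det_permute', det_permute', det_submatrix_equiv_self,
      det_submatrix_equiv_self, Equiv.Perm.sign_symm]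
    have hs : ((Equiv.Perm.sign σ : ℤ) : F) * ((Equiv.Perm.sign σ : ℤ) : F) = 1 := by
      rw [← Int.cast_mul, ← Units.val_mul, Int.units_mul_self]
      simp
    rw [mul_mul_mul_comm, hs, one_mul]
  have hX : (corn A - qb A * ⅟(sb A) * rb A).det =
      (corn A - qb A * ⅟(sb A) * rb A) 0 0 * (corn A - qb A * ⅟(sb A) * rb A) 1 1 -
      (corn A - qb A * ⅟(sb A) * rb A) 0 1 * (corn A - qb A * ⅟(sb A) * rb A) 1 0 :=
    det_fin_two _
  calc A.det * (sb A).det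
      = ((sb A).det * (corn A - qb A * ⅟(sb A) * rb A) 0 0) *
          ((sb A).det * (corn A - qb A * ⅟(sb A) * rb A) 1 1) -
        ((sb A).det * (corn A - qb A * ⅟(sb A) * rb A) 0 1) *
          ((sb A).det * (corn A - qb A * ⅟(sb A) * rb A) 1 0) := by
        rw [h1, hX]; ring
    _ = (mino A 0 0).det * (mino A 1 1).det - (mino A 0 1).det * (mino A 1 0).det := by
        rw [← hminor 0 0, ← hminor 1 1, ← hminor 0 1, ← hminor 1 0,
          hdiag 0, hdiag 1, hoff]

end DJaux

namespace DJaux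

open Matrix

theorem toeplitz_dj {F : Type*} [Field F] (t : ℤ → F) (k : ℕ) (n : ℤ)
    (hS : (Matrix.of fun i j : Fin k => t ((i : ℤ) - (j : ℤ) + n)).det ≠ 0) :
    (Matrix.of fun i j : Fin (k+2) => t ((i : ℤ) - (j : ℤ) + n)).det *
      (Matrix.of fun i j : Fin k => t ((i : ℤ) - (j : ℤ) + n)).det =
    (Matrix.of fun i j : Fin (k+1) => t ((i : ℤ) - (j : ℤ) + n)).det ^ 2 -
      (Matrix.of fun i j : Fin (k+1) => t ((i : ℤ) - (j : ℤ) + (n-1))).det *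
        (Matrix.of fun i j : Fin (k+1) => t ((i : ℤ) - (j : ℤ) + (n+1))).det := by
  set A : Matrix (Fin (k+2)) (Fin (k+2)) F :=
    Matrix.of fun i j => t ((i : ℤ) - (j : ℤ) + n) with hA
  have hsb : sb A = Matrix.of fun i j : Fin k => t ((i : ℤ) - (j : ℤ) + n) := by
    ext i j
    simp only [sb, hA, e2, Matrix.of_apply, Equiv.coe_fn_mk, Sum.elim_inr]
    congr 1
    push_cast
    ring
  have h00 : mino A 0 0 = Matrix.of fun i j : Fin (k+1) => t ((i : ℤ) - (j : ℤ) + n) := by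
    ext i j
    simp only [mino, hA, emb, Matrix.of_apply]
    congr 1
    all_goals push_cast [Fin.coe_castSucc]
    all_goals omega
  have h11 : mino A 1 1 = Matrix.of fun i j : Fin (k+1) => t ((i : ℤ) - (j : ℤ) + n) := by
    ext i j
    simp only [mino, hA, emb, Matrix.of_apply]
    congr 1
    all_goals push_cast [Fin.val_succ]
    all_goals omega
  have h01 : mino A 0 1 = Matrix.of fun i j : Fin (k+1) => t ((i : ℤ) - (j : ℤ) + (n-1)) := by
    ext i j
    simp only [mino, hA, emb, Matrix.of_apply]
    congr 1
    all_goals push_cast [Fin.coe_castSucc, Fin.val_succ]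
    all_goals omega
  have h10 : mino A 1 0 = Matrix.of fun i j : Fin (k+1) => t ((i : ℤ) - (j : ℤ) + (n+1)) := by
    ext i j
    simp only [mino, hA, emb, Matrix.of_apply]
    congr 1
    all_goals push_cast [Fin.coe_castSucc, Fin.val_succ]
    all_goals omega
  have := dj A (by rw [hsb]; exact hS)
  rw [hsb, h00, h11, h01, h10] at this
  rw [this]
  ring

end DJaux

namespace DJaux

open Matrix

theorem toeplitz_dj' {K : Type*} [Field K] (s : ℤ → K) (k : ℕ) (n : ℤ) :
    (Matrix.of fun i j : Fin (k+2) => s ((i : ℤ) - (j : ℤ) + n)).det *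
      (Matrix.of fun i j : Fin k => s ((i : ℤ) - (j : ℤ) + n)).det =
    (Matrix.of fun i j : Fin (k+1) => s ((i : ℤ) - (j : ℤ) + n)).det ^ 2 -
      (Matrix.of fun i j : Fin (k+1) => s ((i : ℤ) - (j : ℤ) + (n-1))).det *
        (Matrix.of fun i j : Fin (k+1) => s ((i : ℤ) - (j : ℤ) + (n+1))).det := by
  classical
  let φ : MvPolynomial ℤ ℤ →+* FractionRing (MvPolynomial ℤ ℤ) := algebraMap _ _
  let t : ℤ → FractionRing (MvPolynomial ℤ ℤ) := fun i => φ (MvPolynomial.X i)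
  have hφ : Function.Injective φ := IsFractionRing.injective _ _
  have hmap : ∀ (a : ℕ) (off : ℤ),
      (Matrix.of fun i j : Fin a => t ((i : ℤ) - (j : ℤ) + off)).det =
        φ (Matrix.det (Matrix.of fun i j : Fin a => MvPolynomial.X ((i : ℤ) - (j : ℤ) + off))) := by
    intro a off
    rw [RingHom.map_det]
    congr 1
  have hSne : (Matrix.of fun i j : Fin k => t ((i : ℤ) - (j : ℤ) + n)).det ≠ 0 := by
    rw [hmap]
    intro h
    have h0 : Matrix.det (Matrix.of fun i j : Fin k =>
        MvPolynomial.X ((i : ℤ) - (j : ℤ) + n) : Matrix _ _ (MvPolynomial ℤ ℤ)) = 0 :=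
      hφ (by simpa using h)
    have h1 := congrArg (MvPolynomial.eval (fun v : ℤ => if v = n then (1 : ℤ) else 0)) h0
    rw [map_zero, RingHom.map_det] at h1
    have hone : (MvPolynomial.eval (fun v : ℤ => if v = n then (1 : ℤ) else 0)).mapMatrix
        (Matrix.of fun i j : Fin k => MvPolynomial.X ((i : ℤ) - (j : ℤ) + n)) = 1 := by
      ext i j
      by_cases hij : i = j
      · subst hij
        simp [RingHom.mapMatrix_apply, Matrix.one_apply]
      · have hvij : (i : ℤ) - (j : ℤ) + n ≠ n := by
          have : (i : ℕ) ≠ (j : ℕ) := fun hc => hij (Fin.ext hc)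
          omega
        simp [RingHom.mapMatrix_apply, Matrix.one_apply, hij, hvij]
    rw [hone, det_one] at h1
    exact one_ne_zero h1
  have hgen := toeplitz_dj t k n hSne
  rw [hmap (k+2) n, hmap k n, hmap (k+1) n, hmap (k+1) (n-1), hmap (k+1) (n+1)] at hgen
  rw [← _root_.map_mul φ, ← _root_.map_mul φ, ← map_pow φ, ← _root_.map_sub φ] at hgen
  have hR := hφ hgen
  have hmapK : ∀ (a : ℕ) (off : ℤ),
      (MvPolynomial.eval₂Hom (Int.castRingHom K) s)
        (Matrix.det (Matrix.of fun i j : Fin a => MvPolynomial.X ((i : ℤ) - (j : ℤ) + off))) =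
      (Matrix.of fun i j : Fin a => s ((i : ℤ) - (j : ℤ) + off)).det := by
    intro a off
    rw [RingHom.map_det]
    congr 1
    ext i j
    simp [RingHom.mapMatrix_apply, MvPolynomial.eval₂Hom_X']
  have hK := congrArg (MvPolynomial.eval₂Hom (Int.castRingHom K) s) hR
  rw [_root_.map_mul, _root_.map_sub, _root_.map_mul, map_pow] at hK
  rw [hmapK, hmapK, hmapK, hmapK, hmapK] at hK
  exact hK

end DJaux

/-- The number wall of a doubly infinite sequence `s` over a field:
`W_{m,n} = det (s_{i-j+n})_{0 ≤ i,j ≤ m}` for `m ≥ 0`, with `W_{-1,n} = 1`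
and `W_{m,n} = 0` for `m < -1`. -/
noncomputable def numberWall {K : Type*} [Field K] (s : ℤ → K) (m n : ℤ) : K :=
  if m < -1 then 0
  else if m = -1 then 1
  else Matrix.det (Matrix.of fun i j : Fin (m.toNat + 1) => s ((i : ℤ) - (j : ℤ) + n))

namespace DJaux

theorem numberWall_eq_det {K : Type*} [Field K] (s : ℤ → K) (m n : ℤ) (h : 0 ≤ m) :
    numberWall s m n =
      Matrix.det (Matrix.of fun i j : Fin (m.toNat + 1) => s ((i : ℤ) - (j : ℤ) + n)) := by
  rw [numberWall, if_neg (by omega), if_neg (by omega)]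

theorem numberWall_neg_one {K : Type*} [Field K] (s : ℤ → K) (n : ℤ) :
    numberWall s (-1) n = 1 := by
  rw [numberWall, if_neg (by omega), if_pos rfl]

end DJaux

open DJaux in
/-- The Desnanot–Jacobi (Dodgson condensation) identity for number walls. -/
theorem numberWall_desnanot_jacobi {K : Type*} [Field K] (s : ℤ → K)
    (m n : ℤ) (hm : 1 ≤ m) :
    numberWall s m n * numberWall s (m - 2) n =
      numberWall s (m - 1) n ^ 2 -
        numberWall s (m - 1) (n - 1) * numberWall s (m - 1) (n + 1) := by
  rcases eq_or_lt_of_le hm with h1 | h2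
  · -- m = 1
    subst h1
    rw [show (1:ℤ) - 2 = -1 by norm_num, show (1:ℤ) - 1 = 0 by norm_num,
      numberWall_neg_one, mul_one,
      numberWall_eq_det s 1 n (by norm_num),
      numberWall_eq_det s 0 n (by norm_num),
      numberWall_eq_det s 0 (n-1) (by norm_num),
      numberWall_eq_det s 0 (n+1) (by norm_num)]
    have := toeplitz_dj' s 0 n
    rw [Matrix.det_fin_zero, mul_one] at this
    exact this
  · -- m ≥ 2
    obtain ⟨j, hj⟩ : ∃ j : ℕ, (m - 2).toNat = j := ⟨_, rfl⟩
    have hj1 : (m - 1).toNat = j + 1 := by omega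
    have hj2 : m.toNat = j + 2 := by omega
    rw [numberWall_eq_det s m n (by omega),
      numberWall_eq_det s (m-2) n (by omega),
      numberWall_eq_det s (m-1) n (by omega),
      numberWall_eq_det s (m-1) (n-1) (by omega),
      numberWall_eq_det s (m-1) (n+1) (by omega),
      hj, hj1, hj2]
    exact toeplitz_dj' s (j + 1) n
end

section
/- Let S be a doubly infinite sequence over a field, with number wall W_{m,n} = det of the (m+1)×(m+1) Toeplitz matrix (s_{i-j+n}). If W_{m-1,n} = 0 and W_{m,n-1} ≠ 0 and W_{m,n+1} ≠ 0 for some m ≥ 1, then W_{m,n} ≠ 0. (Zero entries adjacent horizontally to nonzero entries with a zero above cannot occur: the square-window structure forces this.) -/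
open Matrix

/-- `T_S(n, k - 1)`, of size `k`, so that its determinant is `W_{k-1,n}`. -/
def wallMatrix {R : Type*} (s : ℤ → R) (k : ℕ) (n : ℤ) : Matrix (Fin k) (Fin k) R :=
  of fun i j => s (i - j + n)

section Shift

variable {R : Type*} [Semiring R] (s : ℤ → R) (k : ℕ) (n : ℤ)

theorem wallMatrix_mulVec_snoc_zero (d : Fin k → R) :
    wallMatrix s (k + 1) (n - 1) *ᵥ (Fin.snoc d 0 : Fin (k + 1) → R) =
      wallMatrix s (k + 1) n *ᵥ Fin.cons 0 d := by
  ext i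
  simp only [mulVec, dotProduct, wallMatrix, of_apply]
  rw [Fin.sum_univ_castSucc, Fin.sum_univ_succ]
  simp only [Fin.snoc_castSucc, Fin.snoc_last, Fin.cons_zero, Fin.cons_succ, mul_zero,
    add_zero, zero_add, Fin.val_castSucc, Fin.val_succ]
  exact Finset.sum_congr rfl fun j _ => by push_cast; ring_nf

theorem snoc_zero_vecMul_wallMatrix (r : Fin k → R) :
    (Fin.snoc r 0 : Fin (k + 1) → R) ᵥ* wallMatrix s (k + 1) (n + 1) =
      Fin.cons 0 r ᵥ* wallMatrix s (k + 1) n := by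
  ext j
  simp only [vecMul, dotProduct, wallMatrix, of_apply]
  rw [Fin.sum_univ_castSucc, Fin.sum_univ_succ]
  simp only [Fin.snoc_castSucc, Fin.snoc_last, Fin.cons_zero, Fin.cons_succ, zero_mul,
    add_zero, zero_add, Fin.val_castSucc, Fin.val_succ]
  exact Finset.sum_congr rfl fun i _ => by push_cast; ring_nf

theorem tail_wallMatrix_mulVec_cons_zero (d : Fin k → R) :
    Fin.tail (wallMatrix s (k + 1) n *ᵥ Fin.cons 0 d) = wallMatrix s k n *ᵥ d := by
  ext i
  simp only [Fin.tail, mulVec, dotProduct, wallMatrix, of_apply, Fin.sum_univ_succ,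
    Fin.cons_zero, Fin.cons_succ, mul_zero, zero_add, Fin.val_succ]
  exact Finset.sum_congr rfl fun j _ => by push_cast; ring_nf

end Shift

theorem det_wallMatrix_ne_zero_of_det_eq_zero {R : Type*} [CommRing R] [IsDomain R]
    (s : ℤ → R) (k : ℕ) (n : ℤ) (h0 : (wallMatrix s k n).det = 0)
    (hl : (wallMatrix s (k + 1) (n - 1)).det ≠ 0) (hr : (wallMatrix s (k + 1) (n + 1)).det ≠ 0) :
    (wallMatrix s (k + 1) n).det ≠ 0 := by
  intro hA
  obtain ⟨d, hd, hMd⟩ := exists_mulVec_eq_zero_iff.mpr h0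
  obtain ⟨r, hr0, hrA⟩ := exists_vecMul_eq_zero_iff.mpr hA
  set v := wallMatrix s (k + 1) n *ᵥ Fin.cons 0 d with hv
  have hv_tail : Fin.tail v = 0 := by rw [tail_wallMatrix_mulVec_cons_zero, hMd]
  have hv_head : v 0 ≠ 0 := by
    intro h
    refine hl (exists_mulVec_eq_zero_iff.mp ⟨Fin.snoc d 0, fun hd0 => hd ?_, ?_⟩)
    · funext j
      simpa using congrFun hd0 j.castSucc
    · rw [wallMatrix_mulVec_snoc_zero, ← hv, ← Fin.cons_self_tail v, h, hv_tail]
      exact cons_zero_zero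
  have hr_head : r 0 = 0 := by
    have hrv : r ⬝ᵥ v = 0 := by rw [hv, dotProduct_mulVec, hrA, zero_dotProduct]
    have hv_succ : ∀ i : Fin k, v i.succ = 0 := congrFun hv_tail
    simp only [dotProduct, Fin.sum_univ_succ, hv_succ, mul_zero, Finset.sum_const_zero,
      add_zero] at hrv
    exact (mul_eq_zero.mp hrv).resolve_right hv_head
  refine hr (exists_vecMul_eq_zero_iff.mp ⟨Fin.snoc (Fin.tail r) 0, fun h => hr0 ?_, ?_⟩)
  · have hr_tail : Fin.tail r = 0 := funext fun i => by simpa using congrFun h i.castSucc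
    rw [← Fin.cons_self_tail r, hr_head, hr_tail]
    exact cons_zero_zero
  · rw [snoc_zero_vecMul_wallMatrix, ← hr_head, Fin.cons_self_tail, hrA]

theorem numberWall_natCast {K : Type*} [Field K] (s : ℤ → K) (k : ℕ) (n : ℤ) :
    numberWall s k n = (wallMatrix s (k + 1) n).det := by
  rw [numberWall, if_neg (by omega), if_neg (by omega), Int.toNat_natCast]
  rfl

/-- If `W_{m-1,n} = 0` while `W_{m,n-1} ≠ 0` and `W_{m,n+1} ≠ 0`, then `W_{m,n} ≠ 0`. -/
theorem numberWall_nonzero_of_zero_above {K : Type*} [Field K] (s : ℤ → K)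
    (m n : ℤ) (hm : 1 ≤ m)
    (h0 : numberWall s (m - 1) n = 0)
    (hl : numberWall s m (n - 1) ≠ 0)
    (hr : numberWall s m (n + 1) ≠ 0) :
    numberWall s m n ≠ 0 := by
  obtain ⟨k, rfl⟩ : ∃ k : ℕ, m = k + 1 := ⟨(m - 1).toNat, by omega⟩
  rw [add_sub_cancel_right, numberWall_natCast] at h0
  rw [← Nat.cast_succ, numberWall_natCast] at hl hr ⊢
  exact det_wallMatrix_ne_zero_of_det_eq_zero s (k + 1) n h0 hl hr
end

section
/- Let q be a prime power and let Θ(t) = Σ_{i≥1} s_i t^{-i} ∈ F_q((t^{-1})). Then Θ is a counterexample to the t-adic Littlewood conjecture, i.e., inf over nonzero N(t) ∈ F_q[t] of |N(t)|·|N(t)|_t·⟨N(t)Θ(t)⟩ > 0, if and only if there exists l ∈ ℕ such that the number wall of (s_i)_{i≥1} over F_q contains no square window of side length greater than l. -/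
open scoped Classical

/-- The coefficient of `t^{-i}` in `N(t)·Θ(t)`, where `Θ(t) = Σ_{i≥1} s_i t^{-i}`. -/
noncomputable def prodCoeff {Fq : Type*} [Field Fq] (s : ℕ → Fq) (N : Polynomial Fq)
    (i : ℕ) : Fq :=
  ∑ j ∈ Finset.range (N.natDegree + 1), N.coeff j * s (i + j)

/-- `⟨N(t)·Θ(t)⟩ = q^{-min{i ≥ 1 : c_i ≠ 0}}`, and `0` if the fractional part vanishes. -/
noncomputable def fracNorm {Fq : Type*} [Field Fq] (q : ℕ) (s : ℕ → Fq)
    (N : Polynomial Fq) : ℝ :=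
  if h : ∃ i : ℕ, 1 ≤ i ∧ prodCoeff s N i ≠ 0 then (q : ℝ) ^ (-(Nat.find h : ℤ)) else 0

/-- The Littlewood quantity `|N|·|N|_t·⟨N·Θ⟩`, with `|N| = q^{deg N}` and
`|N|_t = q^{-ν_t(N)}` where `ν_t(N)` is the trailing degree of `N`. -/
noncomputable def littlewoodQty {Fq : Type*} [Field Fq] (q : ℕ) (s : ℕ → Fq)
    (N : Polynomial Fq) : ℝ :=
  (q : ℝ) ^ (N.natDegree : ℤ) * (q : ℝ) ^ (-(N.natTrailingDegree : ℤ)) * fracNorm q s N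

/-- The number wall entry `W_{m,n} = det (s_{i-j+n})_{0 ≤ i,j ≤ m}` of `(s_i)_{i≥1}`,
defined whenever `n ≥ m + 1`. -/
def natWall {Fq : Type*} [Field Fq] (s : ℕ → Fq) (m n : ℕ) : Fq :=
  Matrix.det (Matrix.of fun i j : Fin (m + 1) => s (n + (i : ℕ) - (j : ℕ)))

namespace TLCAux
open Polynomial PowerSeries

variable {Fq : Type*} [Field Fq]

lemma sum_range_shift (F : ℕ → Fq) (h k : ℕ) (h0 : ∀ j, j < h → F j = 0) :
    ∑ j ∈ Finset.range (h + k), F j = ∑ a ∈ Finset.range k, F (h + a) := by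
  rw [Finset.range_eq_Ico,
    ← Finset.sum_Ico_consecutive F (Nat.zero_le h) (Nat.le_add_right h k)]
  have h1 : ∑ i ∈ Finset.Ico 0 h, F i = 0 :=
    Finset.sum_eq_zero (fun j hj => h0 j (Finset.mem_Ico.mp hj).2)
  rw [h1, zero_add, Finset.sum_Ico_eq_sum_range]
  have h2 : h + k - h = k := by omega
  rw [h2, Finset.range_eq_Ico]

noncomputable def polyOfVec (k : ℕ) (v : ℕ → Fq) : Polynomial Fq :=
  ∑ b ∈ Finset.range (k + 1), Polynomial.monomial b (v b)

lemma polyOfVec_coeff (k : ℕ) (v : ℕ → Fq) (b : ℕ) :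
    (polyOfVec k v).coeff b = if b ≤ k then v b else 0 := by
  rw [polyOfVec, Polynomial.finset_sum_coeff]
  simp only [Polynomial.coeff_monomial]
  rw [Finset.sum_ite_eq' (Finset.range (k + 1)) b v]
  simp [Nat.lt_succ_iff]

lemma polyOfVec_natDegree_le (k : ℕ) (v : ℕ → Fq) : (polyOfVec k v).natDegree ≤ k := by
  refine Polynomial.natDegree_le_iff_coeff_eq_zero.mpr (fun N hN => ?_)
  rw [polyOfVec_coeff, if_neg (by omega)]

lemma coeff_poly_mul (q : Polynomial Fq) (f : PowerSeries Fq) (k c : ℕ)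
    (hdeg : q.natDegree ≤ k) (hc : k ≤ c) :
    PowerSeries.coeff c ((q : PowerSeries Fq) * f) =
      ∑ b ∈ Finset.range (k + 1), q.coeff b * PowerSeries.coeff (c - b) f := by
  rw [PowerSeries.coeff_mul, Finset.Nat.sum_antidiagonal_eq_sum_range_succ_mk]
  simp only [Polynomial.coeff_coe]
  rw [← Finset.sum_subset (Finset.range_subset_range.mpr (by omega) :
      Finset.range (k + 1) ⊆ Finset.range (c + 1))]
  intro x hx hnx
  have hk : k < x := by
    simp only [Finset.mem_range] at hx hnx; omega
  rw [Polynomial.coeff_eq_zero_of_natDegree_lt (lt_of_le_of_lt hdeg hk), zero_mul]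

lemma trunc_diff_coeff (φ : PowerSeries Fq) (A B : ℕ)
    (hw : ∀ c, A ≤ c → c ≤ B → PowerSeries.coeff c φ = 0) :
    ∀ c, c ≤ B →
      PowerSeries.coeff c (φ - ((PowerSeries.trunc A φ : Polynomial Fq) : PowerSeries Fq)) = 0 := by
  intro c hc
  rw [map_sub, Polynomial.coeff_coe, PowerSeries.coeff_trunc]
  by_cases h : c < A
  · simp [h]
  · rw [if_neg h, sub_zero]
    exact hw c (by omega) hc

lemma coeff_mul_lowzero (p : Polynomial Fq) (ψ : PowerSeries Fq) (n B : ℕ) (hn : n ≤ B)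
    (hz : ∀ c, c ≤ B → PowerSeries.coeff c ψ = 0) :
    PowerSeries.coeff n ((p : PowerSeries Fq) * ψ) = 0 := by
  rw [PowerSeries.coeff_mul]
  apply Finset.sum_eq_zero
  intro x hx
  rw [Finset.HasAntidiagonal.mem_antidiagonal] at hx
  rw [hz x.2 (by omega), mul_zero]

lemma natDegree_trunc_le (φ : PowerSeries Fq) (A : ℕ) (hA : 1 ≤ A) :
    (PowerSeries.trunc A φ).natDegree ≤ A - 1 := by
  rcases eq_or_ne (PowerSeries.trunc A φ) 0 with h | h
  · rw [h]; simp
  · have h1 := PowerSeries.degree_trunc_lt φ A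
    have h2 := (Polynomial.natDegree_lt_iff_degree_lt h).mpr h1
    omega

lemma lemR (f : PowerSeries Fq) (q₁ q₂ : Polynomial Fq) (A B : ℕ) (hA : 1 ≤ A)
    (h₁ : q₁.natDegree + A ≤ B + 1) (h₂ : q₂.natDegree + A ≤ B + 1)
    (w₁ : ∀ c, A ≤ c → c ≤ B → PowerSeries.coeff c ((q₁ : PowerSeries Fq) * f) = 0)
    (w₂ : ∀ c, A ≤ c → c ≤ B → PowerSeries.coeff c ((q₂ : PowerSeries Fq) * f) = 0) :
    q₂ * PowerSeries.trunc A ((q₁ : PowerSeries Fq) * f)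
      = q₁ * PowerSeries.trunc A ((q₂ : PowerSeries Fq) * f) := by
  set T₁ := PowerSeries.trunc A ((q₁ : PowerSeries Fq) * f) with hT₁
  set T₂ := PowerSeries.trunc A ((q₂ : PowerSeries Fq) * f) with hT₂
  have hd₁ : T₁.natDegree ≤ A - 1 := natDegree_trunc_le _ _ hA
  have hd₂ : T₂.natDegree ≤ A - 1 := natDegree_trunc_le _ _ hA
  ext n
  by_cases hn : n ≤ B
  · have e1 : ∀ c, c ≤ B →
        PowerSeries.coeff c ((T₁ : PowerSeries Fq) - (q₁ : PowerSeries Fq) * f) = 0 := by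
      intro c hc
      have := trunc_diff_coeff ((q₁ : PowerSeries Fq) * f) A B w₁ c hc
      rw [← neg_eq_zero, ← map_neg]
      convert this using 2
      ring
    have e2 : ∀ c, c ≤ B →
        PowerSeries.coeff c ((T₂ : PowerSeries Fq) - (q₂ : PowerSeries Fq) * f) = 0 := by
      intro c hc
      have := trunc_diff_coeff ((q₂ : PowerSeries Fq) * f) A B w₂ c hc
      rw [← neg_eq_zero, ← map_neg]
      convert this using 2
      ring
    have expand : ((q₂ * T₁ : Polynomial Fq) : PowerSeries Fq)
        - ((q₁ * T₂ : Polynomial Fq) : PowerSeries Fq)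
        = (q₂ : PowerSeries Fq) * ((T₁ : PowerSeries Fq) - (q₁ : PowerSeries Fq) * f)
          - (q₁ : PowerSeries Fq) * ((T₂ : PowerSeries Fq) - (q₂ : PowerSeries Fq) * f) := by
      rw [Polynomial.coe_mul, Polynomial.coe_mul]
      ring
    have key : PowerSeries.coeff n (((q₂ * T₁ : Polynomial Fq) : PowerSeries Fq)
        - ((q₁ * T₂ : Polynomial Fq) : PowerSeries Fq)) = 0 := by
      rw [expand, map_sub, coeff_mul_lowzero q₂ _ n B hn e1, coeff_mul_lowzero q₁ _ n B hn e2,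
        sub_zero]
    rw [map_sub, Polynomial.coeff_coe, Polynomial.coeff_coe, sub_eq_zero] at key
    exact key
  · rw [Polynomial.coeff_eq_zero_of_natDegree_lt, Polynomial.coeff_eq_zero_of_natDegree_lt]
    · calc (q₁ * T₂).natDegree ≤ q₁.natDegree + T₂.natDegree := Polynomial.natDegree_mul_le
        _ < n := by omega
    · calc (q₂ * T₁).natDegree ≤ q₂.natDegree + T₁.natDegree := Polynomial.natDegree_mul_le
        _ < n := by omega

lemma lemU (V : Polynomial Fq) (Y E : PowerSeries Fq) (B : ℕ)
    (hV0 : V.coeff 0 ≠ 0) (hprod : (V : PowerSeries Fq) * Y = E)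
    (hE : ∀ c, c ≤ B → PowerSeries.coeff c E = 0) :
    ∀ c, c ≤ B → PowerSeries.coeff c Y = 0 := by
  intro c
  induction c using Nat.strong_induction_on with
  | _ c ih =>
    intro hc
    have h0 : PowerSeries.coeff c E = 0 := hE c hc
    rw [← hprod, PowerSeries.coeff_mul] at h0
    rw [Finset.sum_eq_single (0, c)] at h0
    · simp only [Polynomial.coeff_coe] at h0
      exact (mul_eq_zero.mp h0).resolve_left hV0
    · intro p hp hne
      rw [Finset.HasAntidiagonal.mem_antidiagonal] at hp
      have hp2 : p.2 < c := by
        rcases Nat.eq_zero_or_pos p.1 with h | h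
        · exfalso; apply hne
          have : p = (p.1, p.2) := rfl
          rw [this, h]
          simp only [Prod.mk.injEq]
          exact ⟨trivial, by omega⟩
        · omega
      rw [ih p.2 hp2 (by omega), mul_zero]
    · intro h
      exact absurd (Finset.HasAntidiagonal.mem_antidiagonal.mpr (by simp)) h


lemma stepLemma (f : PowerSeries Fq) (m l L₀ : ℕ)
    (a b : Polynomial Fq) (ha0 : a ≠ 0) (hb0 : b ≠ 0)
    (hdega : a.natDegree ≤ m + 1) (hdegb : b.natDegree ≤ m)
    (hwa : ∀ c, L₀ ≤ c → c ≤ L₀ + m + l + 1 →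
      PowerSeries.coeff c ((a : PowerSeries Fq) * f) = 0)
    (hwb : ∀ c, L₀ + 1 ≤ c → c ≤ L₀ + m + l + 1 →
      PowerSeries.coeff c ((b : PowerSeries Fq) * f) = 0) :
    ∃ q : Polynomial Fq, q ≠ 0 ∧ q.natDegree ≤ m ∧
      ∀ c, L₀ ≤ c → c ≤ L₀ + m + l + 1 →
        PowerSeries.coeff c ((q : PowerSeries Fq) * f) = 0 := by
  by_cases hdega' : a.natDegree ≤ m
  · exact ⟨a, ha0, hdega', hwa⟩
  by_cases hβ : PowerSeries.coeff L₀ ((b : PowerSeries Fq) * f) = 0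
  · refine ⟨b, hb0, hdegb, fun c hc1 hc2 => ?_⟩
    rcases eq_or_lt_of_le hc1 with h | h
    · rwa [← h]
    · exact hwb c (by omega) hc2
  have hdega2 : a.natDegree = m + 1 := by omega
  set B := L₀ + m + l + 1 with hB
  set Ta := PowerSeries.trunc (L₀ + 1) ((a : PowerSeries Fq) * f) with hTadef
  set Tb := PowerSeries.trunc (L₀ + 1) ((b : PowerSeries Fq) * f) with hTbdef
  have hR : b * Ta = a * Tb :=
    lemR f a b (L₀ + 1) B (by omega) (by omega) (by omega)
      (fun c h1 h2 => hwa c (by omega) h2) hwb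
  have hTbL : Tb.coeff L₀ = PowerSeries.coeff L₀ ((b : PowerSeries Fq) * f) := by
    rw [hTbdef, PowerSeries.coeff_trunc, if_pos (by omega)]
  have hTb0 : Tb ≠ 0 := by
    intro h
    exact hβ (by rw [← hTbL, h, Polynomial.coeff_zero])
  have hTbdeg : Tb.natDegree = L₀ := by
    have h1 : Tb.natDegree ≤ L₀ + 1 - 1 := natDegree_trunc_le _ _ (by omega)
    have h2 : L₀ ≤ Tb.natDegree := Polynomial.le_natDegree_of_ne_zero (by rw [hTbL]; exact hβ)
    omega
  have hTa0 : Ta ≠ 0 := by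
    intro h
    rw [h, mul_zero] at hR
    exact hTb0 ((mul_eq_zero.mp hR.symm).resolve_left ha0)
  set g := EuclideanDomain.gcd Ta Tb with hg
  have hg0 : g ≠ 0 := by
    intro h
    exact hTb0 (EuclideanDomain.gcd_eq_zero_iff.mp h).2
  obtain ⟨U, hU⟩ : g ∣ Ta := EuclideanDomain.gcd_dvd_left Ta Tb
  obtain ⟨V, hV⟩ : g ∣ Tb := EuclideanDomain.gcd_dvd_right Ta Tb
  have hU0 : U ≠ 0 := by rintro rfl; rw [mul_zero] at hU; exact hTa0 hU
  have hV0 : V ≠ 0 := by rintro rfl; rw [mul_zero] at hV; exact hTb0 hV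
  have hcop : IsCoprime U V := by
    have hbz := EuclideanDomain.gcd_eq_gcd_ab Ta Tb
    rw [← hg] at hbz
    refine ⟨EuclideanDomain.gcdA Ta Tb, EuclideanDomain.gcdB Ta Tb, ?_⟩
    have h1 : g * (EuclideanDomain.gcdA Ta Tb * U + EuclideanDomain.gcdB Ta Tb * V)
        = g * 1 := by
      rw [mul_one]
      calc g * (EuclideanDomain.gcdA Ta Tb * U + EuclideanDomain.gcdB Ta Tb * V)
          = (g * U) * EuclideanDomain.gcdA Ta Tb + (g * V) * EuclideanDomain.gcdB Ta Tb := by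
            ring
        _ = Ta * EuclideanDomain.gcdA Ta Tb + Tb * EuclideanDomain.gcdB Ta Tb := by
            rw [← hU, ← hV]
        _ = g := hbz.symm
    exact mul_left_cancel₀ hg0 h1
  have haV : a * V = b * U := by
    have h1 : g * (b * U) = g * (a * V) := by
      calc g * (b * U) = b * (g * U) := by ring
        _ = b * Ta := by rw [← hU]
        _ = a * Tb := hR
        _ = a * (g * V) := by rw [← hV]
        _ = g * (a * V) := by ring
    exact (mul_left_cancel₀ hg0 h1).symm
  obtain ⟨w, hw⟩ : V ∣ b := by
    refine hcop.symm.dvd_of_dvd_mul_right ⟨a, ?_⟩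
    rw [← haV]; ring
  have hw0 : w ≠ 0 := by rintro rfl; rw [mul_zero] at hw; exact hb0 hw
  have haw : a = w * U := by
    have h1 : V * a = V * (w * U) := by
      calc V * a = a * V := by ring
        _ = b * U := haV
        _ = V * w * U := by rw [hw]
        _ = V * (w * U) := by ring
    exact mul_left_cancel₀ hV0 h1
  have hEb : ∀ c, c ≤ B →
      PowerSeries.coeff c ((b : PowerSeries Fq) * f - (Tb : PowerSeries Fq)) = 0 :=
    trunc_diff_coeff ((b : PowerSeries Fq) * f) (L₀ + 1) B hwb
  have hEa : ∀ c, c ≤ B →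
      PowerSeries.coeff c ((a : PowerSeries Fq) * f - (Ta : PowerSeries Fq)) = 0 :=
    trunc_diff_coeff ((a : PowerSeries Fq) * f) (L₀ + 1) B (fun c h1 h2 => hwa c (by omega) h2)
  have hkeyb : (V : PowerSeries Fq) * ((w : PowerSeries Fq) * f - (g : PowerSeries Fq))
      = (b : PowerSeries Fq) * f - (Tb : PowerSeries Fq) := by
    have hb' : (b : PowerSeries Fq) = (V : PowerSeries Fq) * (w : PowerSeries Fq) := by
      rw [hw, Polynomial.coe_mul]
    have hTb' : (Tb : PowerSeries Fq) = (g : PowerSeries Fq) * (V : PowerSeries Fq) := by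
      rw [hV, Polynomial.coe_mul]
    rw [hb', hTb']; ring
  have hkeya : (U : PowerSeries Fq) * ((w : PowerSeries Fq) * f - (g : PowerSeries Fq))
      = (a : PowerSeries Fq) * f - (Ta : PowerSeries Fq) := by
    have ha' : (a : PowerSeries Fq) = (w : PowerSeries Fq) * (U : PowerSeries Fq) := by
      rw [haw, Polynomial.coe_mul]
    have hTa' : (Ta : PowerSeries Fq) = (g : PowerSeries Fq) * (U : PowerSeries Fq) := by
      rw [hU, Polynomial.coe_mul]
    rw [ha', hTa']; ring
  have hcv : U.coeff 0 ≠ 0 ∨ V.coeff 0 ≠ 0 := by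
    by_contra hcon
    push_neg at hcon
    exact Polynomial.not_isUnit_X
      (hcop.isUnit_of_dvd' (Polynomial.X_dvd_iff.mpr hcon.1) (Polynomial.X_dvd_iff.mpr hcon.2))
  have htail : ∀ c, c ≤ B →
      PowerSeries.coeff c ((w : PowerSeries Fq) * f - (g : PowerSeries Fq)) = 0 := by
    rcases hcv with h | h
    · exact lemU U _ _ B h hkeya hEa
    · exact lemU V _ _ B h hkeyb hEb
  have hdegTb : Tb.natDegree = g.natDegree + V.natDegree := by
    rw [hV]; exact Polynomial.natDegree_mul hg0 hV0
  have hdegb' : b.natDegree = V.natDegree + w.natDegree := by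
    rw [hw]; exact Polynomial.natDegree_mul hV0 hw0
  by_cases hdV : 1 ≤ V.natDegree
  · refine ⟨w, hw0, by omega, fun c hc1 hc2 => ?_⟩
    have ht := htail c hc2
    rw [map_sub, sub_eq_zero] at ht
    rw [ht, Polynomial.coeff_coe]
    apply Polynomial.coeff_eq_zero_of_natDegree_lt
    omega
  · exfalso
    push_neg at hdV
    have hVdeg0 : V.natDegree = 0 := by omega
    have hdega3 : a.natDegree = w.natDegree + U.natDegree := by
      rw [haw]; exact Polynomial.natDegree_mul hw0 hU0
    have hUdeg : 1 ≤ U.natDegree := by omega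
    have hUdeg2 : U.natDegree ≤ m + 1 := by omega
    have h0 : PowerSeries.coeff (U.natDegree + L₀) ((a : PowerSeries Fq) * f) = 0 :=
      hwa _ (by omega) (by omega)
    have hsplit : (a : PowerSeries Fq) * f
        = ((U * g : Polynomial Fq) : PowerSeries Fq)
          + (U : PowerSeries Fq) * ((w : PowerSeries Fq) * f - (g : PowerSeries Fq)) := by
      have ha' : (a : PowerSeries Fq) = (w : PowerSeries Fq) * (U : PowerSeries Fq) := by
        rw [haw, Polynomial.coe_mul]
      rw [Polynomial.coe_mul, ha']; ring
    rw [hsplit, map_add, coeff_mul_lowzero U _ _ B (by omega) htail, add_zero,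
      Polynomial.coeff_coe] at h0
    have h3 : (U * g).coeff (U.natDegree + L₀) = U.leadingCoeff * g.leadingCoeff := by
      have := Polynomial.coeff_mul_degree_add_degree U g
      rwa [show g.natDegree = L₀ by omega] at this
    rw [h3] at h0
    exact mul_ne_zero (Polynomial.leadingCoeff_ne_zero.mpr hU0)
      (Polynomial.leadingCoeff_ne_zero.mpr hg0) h0

lemma W3 (f : PowerSeries Fq) :
    ∀ l m L₀ : ℕ,
      (∀ i j, i ≤ l → j ≤ l → ∃ q : Polynomial Fq, q ≠ 0 ∧ q.natDegree ≤ m + i ∧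
        ∀ c, L₀ + j ≤ c → c ≤ L₀ + j + (m + i) →
          PowerSeries.coeff c ((q : PowerSeries Fq) * f) = 0) →
      ∃ q : Polynomial Fq, q ≠ 0 ∧ q.natDegree ≤ m ∧
        ∀ c, L₀ ≤ c → c ≤ L₀ + (m + l) →
          PowerSeries.coeff c ((q : PowerSeries Fq) * f) = 0 := by
  intro l
  induction l with
  | zero =>
    intro m L₀ hyp
    obtain ⟨q, h1, h2, h3⟩ := hyp 0 0 le_rfl le_rfl
    exact ⟨q, h1, by simpa using h2, fun c hc1 hc2 => h3 c (by omega) (by omega)⟩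
  | succ l ih =>
    intro m L₀ hyp
    obtain ⟨b, hb0, hbdeg, hbw⟩ := ih m (L₀ + 1) (fun i j hi hj => by
      obtain ⟨q, h1, h2, h3⟩ := hyp i (j + 1) (by omega) (by omega)
      exact ⟨q, h1, h2, fun c hc1 hc2 => h3 c (by omega) (by omega)⟩)
    obtain ⟨a, ha0, hadeg, haw⟩ := ih (m + 1) L₀ (fun i j hi hj => by
      obtain ⟨q, h1, h2, h3⟩ := hyp (i + 1) j (by omega) (by omega)
      exact ⟨q, h1, by omega, fun c hc1 hc2 => h3 c (by omega) (by omega)⟩)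
    obtain ⟨q, h1, h2, h3⟩ := stepLemma f m l L₀ a b ha0 hb0 hadeg hbdeg
      (fun c hc1 hc2 => haw c hc1 (by omega)) (fun c hc1 hc2 => hbw c (by omega) (by omega))
    exact ⟨q, h1, h2, fun c hc1 hc2 => h3 c hc1 (by omega)⟩


lemma bridge1 (s : ℕ → Fq) (m n l : ℕ) (hmn : m + (l + 1) ≤ n)
    (hz : ∀ i j, i ≤ l → j ≤ l → natWall s (m + i) (n + j) = 0) :
    ∃ v : ℕ → Fq, (∀ a, m < a → v a = 0) ∧ (∃ a, v a ≠ 0) ∧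
      ∀ x, n - m ≤ x → x ≤ n + l →
        ∑ a ∈ Finset.range (m + 1), v a * s (x + a) = 0 := by
  set f : PowerSeries Fq := PowerSeries.mk (fun x => s (n - m - l + x)) with hf
  have hyp : ∀ i j, i ≤ l → j ≤ l → ∃ q : Polynomial Fq, q ≠ 0 ∧ q.natDegree ≤ m + i ∧
      ∀ c, (m + l) + j ≤ c → c ≤ (m + l) + j + (m + i) →
        PowerSeries.coeff c ((q : PowerSeries Fq) * f) = 0 := by
    intro i j hi hj
    have hdet : (Matrix.of fun α β : Fin (m + i + 1) =>
        s (n + j + (α : ℕ) - (β : ℕ))).det = 0 := hz i j hi hj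
    obtain ⟨x, hx0, hxz⟩ := Matrix.exists_mulVec_eq_zero_iff.mpr hdet
    refine ⟨polyOfVec (m + i) (fun b => if hb : b < m + i + 1 then x ⟨b, hb⟩ else 0),
      ?_, polyOfVec_natDegree_le _ _, ?_⟩
    · obtain ⟨β, hβ⟩ := Function.ne_iff.mp hx0
      intro hq0
      apply hβ
      have h1 := polyOfVec_coeff (m + i)
        (fun b => if hb : b < m + i + 1 then x ⟨b, hb⟩ else 0) (β : ℕ)
      rw [hq0, Polynomial.coeff_zero, if_pos (by omega)] at h1
      simp only [Fin.is_lt, dif_pos, Fin.eta] at h1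
      rw [← h1]
      rfl
    · intro c hc1 hc2
      have hαlt : c - ((m + l) + j) < m + i + 1 := by omega
      have hrow : ∑ β : Fin (m + i + 1),
          s (n + j + (c - ((m + l) + j)) - (β : ℕ)) * x β = 0 := by
        have h2 := congrFun hxz (⟨c - ((m + l) + j), hαlt⟩ : Fin (m + i + 1))
        simpa [Matrix.mulVec, dotProduct] using h2
      rw [coeff_poly_mul _ _ (m + i) c (polyOfVec_natDegree_le _ _) (by omega)]
      rw [← Fin.sum_univ_eq_sum_range
        (fun b => (polyOfVec (m + i) (fun b' => if hb : b' < m + i + 1 then x ⟨b', hb⟩ else 0)).coeff b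
          * PowerSeries.coeff (c - b) f) (m + i + 1)]
      rw [← hrow]
      apply Finset.sum_congr rfl
      intro β _
      rw [polyOfVec_coeff, if_pos (by omega)]
      simp only [Fin.is_lt, dif_pos, Fin.eta]
      rw [hf, PowerSeries.coeff_mk, mul_comm]
      congr 2
      omega
  obtain ⟨q, hq0, hqdeg, hqw⟩ := W3 f l m (m + l) hyp
  refine ⟨fun a => if a ≤ m then q.coeff (m - a) else 0,
    fun a ha => if_neg (by omega), ?_, ?_⟩
  · refine ⟨m - q.natDegree, ?_⟩
    have hqd : q.natDegree ≤ m := hqdeg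
    show (if m - q.natDegree ≤ m then q.coeff (m - (m - q.natDegree)) else 0) ≠ 0
    rw [if_pos (by omega), show m - (m - q.natDegree) = q.natDegree by omega]
    exact Polynomial.leadingCoeff_ne_zero.mpr hq0
  · intro x hx1 hx2
    have hstep : ∀ a ∈ Finset.range (m + 1),
        (if a ≤ m then q.coeff (m - a) else 0) * s (x + a)
          = q.coeff (m + 1 - 1 - a) * s (x + m - (m + 1 - 1 - a)) := by
      intro a ha
      simp only [Finset.mem_range] at ha
      rw [if_pos (by omega), show m - a = m + 1 - 1 - a by omega,
        show x + a = x + m - (m + 1 - 1 - a) by omega]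
    rw [Finset.sum_congr rfl hstep,
      Finset.sum_range_reflect (fun a => q.coeff a * s (x + m - a)) (m + 1)]
    have hcoef := hqw (x + m - (n - m - l)) (by omega) (by omega)
    rw [coeff_poly_mul q f m _ hqdeg (by omega)] at hcoef
    rw [← hcoef]
    apply Finset.sum_congr rfl
    intro a ha
    simp only [Finset.mem_range] at ha
    rw [hf, PowerSeries.coeff_mk]
    congr 2
    omega

lemma bridge2 (s : ℕ → Fq) (m l n' : ℕ) (v : ℕ → Fq)
    (hsupp : ∀ a, m < a → v a = 0) (hnz : ∃ a, v a ≠ 0)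
    (hrel : ∀ x, n' ≤ x → x ≤ n' + m + 2 * l →
      ∑ a ∈ Finset.range (m + 1), v a * s (x + a) = 0)
    (hn' : 1 ≤ n') :
    ∀ i j, i ≤ l → j ≤ l → natWall s (m + i) (n' + m + l + j) = 0 := by
  intro i j hi hj
  rw [natWall]
  apply Matrix.exists_mulVec_eq_zero_iff.mp
  refine ⟨fun β : Fin (m + i + 1) => v (m + i - (β : ℕ)), ?_, ?_⟩
  · obtain ⟨a, ha⟩ := hnz
    have ham : a ≤ m := by
      by_contra hcon
      exact ha (hsupp a (by omega))
    intro hcon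
    apply ha
    have h1 := congrFun hcon (⟨m + i - a, by omega⟩ : Fin (m + i + 1))
    simpa [show m + i - (m + i - a) = a by omega] using h1
  · funext α
    have hgoal : ∑ β : Fin (m + i + 1),
        s (n' + m + l + j + (α : ℕ) - (β : ℕ)) * v (m + i - (β : ℕ)) = 0 := by
      rw [Fin.sum_univ_eq_sum_range
        (fun b => s (n' + m + l + j + (α : ℕ) - b) * v (m + i - b)) (m + i + 1)]
      have hstep : ∀ b ∈ Finset.range (m + i + 1),
          s (n' + m + l + j + (α : ℕ) - (m + i + 1 - 1 - b)) * v (m + i - (m + i + 1 - 1 - b))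
            = v b * s ((n' + l + j + (α : ℕ) - i) + b) := by
        intro b hb
        simp only [Finset.mem_range] at hb
        rw [mul_comm]
        congr 2
        · omega
        · omega
      rw [← Finset.sum_range_reflect
        (fun b => s (n' + m + l + j + (α : ℕ) - b) * v (m + i - b)) (m + i + 1),
        Finset.sum_congr rfl hstep]
      have hext : ∑ b ∈ Finset.range (m + i + 1), v b * s ((n' + l + j + (α : ℕ) - i) + b)
          = ∑ b ∈ Finset.range (m + 1), v b * s ((n' + l + j + (α : ℕ) - i) + b) := by
        symm
        apply Finset.sum_subset (Finset.range_subset_range.mpr (by omega))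
        intro b hb1 hb2
        simp only [Finset.mem_range] at hb1 hb2
        rw [hsupp b (by omega), zero_mul]
      rw [hext]
      exact hrel _ (by omega) (by omega)
    have h2 : (Matrix.of fun α' β' : Fin (m + i + 1) =>
        s (n' + m + l + j + (α' : ℕ) - (β' : ℕ))).mulVec
        (fun β : Fin (m + i + 1) => v (m + i - (β : ℕ))) α
        = ∑ β : Fin (m + i + 1),
          s (n' + m + l + j + (α : ℕ) - (β : ℕ)) * v (m + i - (β : ℕ)) := by
      simp [Matrix.mulVec, dotProduct]
    rw [h2, hgoal]
    rfl

lemma bridge4 [Fintype Fq] (s : ℕ → Fq) (m n' len : ℕ) (hn' : 1 ≤ n')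
    (v : ℕ → Fq) (hsupp : ∀ a, m < a → v a = 0) (hnz : ∃ a, v a ≠ 0)
    (hrel : ∀ x, n' ≤ x → x ≤ n' + len →
      ∑ a ∈ Finset.range (m + 1), v a * s (x + a) = 0) :
    ∃ N : Polynomial Fq, N ≠ 0 ∧
      littlewoodQty (Fintype.card Fq) s N
        ≤ (Fintype.card Fq : ℝ) ^ ((m : ℤ) - ((len : ℤ) + 2)) := by
  obtain ⟨a₀, ha₀⟩ := hnz
  have ha₀m : a₀ ≤ m := by
    by_contra h
    exact ha₀ (hsupp a₀ (by omega))
  have hvp0 : polyOfVec m v ≠ 0 := by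
    intro h
    apply ha₀
    have h1 := polyOfVec_coeff m v a₀
    rwa [h, Polynomial.coeff_zero, if_pos ha₀m, eq_comm] at h1
  set N := polyOfVec m v * Polynomial.X ^ (n' - 1) with hN
  have hX0 : (Polynomial.X ^ (n' - 1) : Polynomial Fq) ≠ 0 :=
    pow_ne_zero _ Polynomial.X_ne_zero
  have hN0 : N ≠ 0 := mul_ne_zero hvp0 hX0
  have hdN : N.natDegree = (polyOfVec m v).natDegree + (n' - 1) := by
    rw [hN, Polynomial.natDegree_mul hvp0 hX0, Polynomial.natDegree_X_pow]
  have hνN : n' - 1 ≤ N.natTrailingDegree := by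
    rw [hN, Polynomial.natTrailingDegree_mul hvp0 hX0, Polynomial.natTrailingDegree_X_pow]
    omega
  have hprod : ∀ i, 1 ≤ i → i ≤ len + 1 → prodCoeff s N i = 0 := by
    intro i hi1 hi2
    rw [prodCoeff]
    have hext : ∑ j ∈ Finset.range (N.natDegree + 1), N.coeff j * s (i + j)
        = ∑ j ∈ Finset.range ((n' - 1) + (m + 1)), N.coeff j * s (i + j) := by
      apply Finset.sum_subset (Finset.range_subset_range.mpr (by
        have := polyOfVec_natDegree_le m v
        omega))
      intro b hb1 hb2
      simp only [Finset.mem_range] at hb1 hb2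
      rw [Polynomial.coeff_eq_zero_of_natDegree_lt (by omega), zero_mul]
    rw [hext, sum_range_shift _ (n' - 1) (m + 1) (fun b hb => by
      rw [hN, Polynomial.coeff_mul_X_pow', if_neg (by omega), zero_mul])]
    have hterm : ∀ a ∈ Finset.range (m + 1),
        N.coeff (n' - 1 + a) * s (i + (n' - 1 + a)) = v a * s ((i + n' - 1) + a) := by
      intro a ha
      simp only [Finset.mem_range] at ha
      rw [hN, Polynomial.coeff_mul_X_pow', if_pos (by omega),
        show n' - 1 + a - (n' - 1) = a by omega, polyOfVec_coeff, if_pos (by omega),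
        show i + (n' - 1 + a) = (i + n' - 1) + a by omega]
    rw [Finset.sum_congr rfl hterm]
    exact hrel (i + n' - 1) (by omega) (by omega)
  refine ⟨N, hN0, ?_⟩
  rw [littlewoodQty, fracNorm]
  split_ifs with h
  · have hk : len + 2 ≤ Nat.find h := by
      by_contra hk'
      push_neg at hk'
      obtain ⟨h1, h2⟩ := Nat.find_spec h
      exact h2 (hprod _ h1 (by omega))
    have hQ0 : (0 : ℝ) < (Fintype.card Fq : ℝ) := by exact_mod_cast Fintype.card_pos
    have hQ1 : (1 : ℝ) ≤ (Fintype.card Fq : ℝ) := by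
      have : (1 : ℕ) ≤ Fintype.card Fq := Fintype.card_pos
      exact_mod_cast this
    rw [← zpow_add₀ (ne_of_gt hQ0), ← zpow_add₀ (ne_of_gt hQ0)]
    apply zpow_le_zpow_right₀ hQ1
    have hd := polyOfVec_natDegree_le m v
    omega
  · rw [mul_zero]
    positivity


end TLCAux

/-- `Θ(t) = Σ_{i≥1} s_i t^{-i}` is a counterexample to the `t`-adic Littlewood
conjecture (the infimum of `|N|·|N|_t·⟨N·Θ⟩` over nonzero `N` is positive) if
and only if there is an `l` such that the number wall of `(s_i)_{i≥1}` contains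
no square window of side length greater than `l` (every defined
`(l+1) × (l+1)` block of the wall contains a nonzero entry). -/
theorem tLC_counterexample_iff_bounded_windows {Fq : Type*} [Field Fq] [Fintype Fq]
    (s : ℕ → Fq) :
    (∃ ε : ℝ, 0 < ε ∧ ∀ N : Polynomial Fq, N ≠ 0 →
        ε ≤ littlewoodQty (Fintype.card Fq) s N) ↔
      (∃ l : ℕ, ∀ m n : ℕ, m + (l + 1) ≤ n →
        ∃ i j : ℕ, i ≤ l ∧ j ≤ l ∧ natWall s (m + i) (n + j) ≠ 0) := by
  have hQ1 : (1 : ℝ) < (Fintype.card Fq : ℝ) := by exact_mod_cast Fintype.one_lt_card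
  have hQ0 : (0 : ℝ) < (Fintype.card Fq : ℝ) := by linarith
  constructor
  · rintro ⟨ε, hε, hLB⟩
    by_contra hcon
    push_neg at hcon
    have hinv : ((Fintype.card Fq : ℝ))⁻¹ < 1 := by
      rw [inv_lt_one_iff₀]
      right
      exact hQ1
    obtain ⟨n₁, hn₁⟩ := exists_pow_lt_of_lt_one hε hinv
    obtain ⟨m₀, n₀, hmn, hz⟩ := hcon n₁
    obtain ⟨v, hsupp, hnz, hrel⟩ := TLCAux.bridge1 s m₀ n₀ n₁ hmn hz
    obtain ⟨N, hN0, hNle⟩ := TLCAux.bridge4 s m₀ (n₀ - m₀) (m₀ + n₁) (by omega) v hsupp hnz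
      (fun x hx1 hx2 => hrel x hx1 (by omega))
    have hlt : littlewoodQty (Fintype.card Fq) s N < ε := by
      calc littlewoodQty (Fintype.card Fq) s N
          ≤ (Fintype.card Fq : ℝ) ^ ((m₀ : ℤ) - (((m₀ + n₁ : ℕ) : ℤ) + 2)) := hNle
        _ ≤ (Fintype.card Fq : ℝ) ^ (-(n₁ : ℤ)) := by
            apply zpow_le_zpow_right₀ hQ1.le
            push_cast
            omega
        _ = ((Fintype.card Fq : ℝ))⁻¹ ^ n₁ := by
            rw [zpow_neg, ← inv_zpow, zpow_natCast]
        _ < ε := hn₁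
    exact absurd (hLB N hN0) (not_le.mpr hlt)
  · rintro ⟨l, hRHS⟩
    refine ⟨(Fintype.card Fq : ℝ) ^ (-(2 * (l : ℤ) + 4)), by positivity, ?_⟩
    intro N hN0
    by_contra hlt
    push_neg at hlt
    have hνd : N.natTrailingDegree ≤ N.natDegree := Polynomial.natTrailingDegree_le_natDegree N
    have hzero : ∀ i, 1 ≤ i →
        i ≤ (N.natDegree - N.natTrailingDegree) + 2 * l + 1 → prodCoeff s N i = 0 := by
      rw [littlewoodQty, fracNorm] at hlt
      split_ifs at hlt with h
      · rw [← zpow_add₀ (ne_of_gt hQ0), ← zpow_add₀ (ne_of_gt hQ0)] at hlt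
        have hexp := (zpow_lt_zpow_iff_right₀ hQ1).mp hlt
        intro i hi1 hi2
        by_contra hne
        exact Nat.find_min h (show i < Nat.find h by omega) ⟨hi1, hne⟩
      · push_neg at h
        intro i hi1 _
        exact h i hi1
    have hv0 : N.coeff N.natTrailingDegree ≠ 0 := by
      have h1 := Polynomial.trailingCoeff_nonzero_iff_nonzero.mpr hN0
      rwa [Polynomial.trailingCoeff] at h1
    have hrel : ∀ x, N.natTrailingDegree + 1 ≤ x →
        x ≤ (N.natTrailingDegree + 1) + (N.natDegree - N.natTrailingDegree) + 2 * l →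
        ∑ a ∈ Finset.range ((N.natDegree - N.natTrailingDegree) + 1),
          N.coeff (N.natTrailingDegree + a) * s (x + a) = 0 := by
      intro x hx1 hx2
      have hp := hzero (x - N.natTrailingDegree) (by omega) (by omega)
      rw [prodCoeff] at hp
      rw [show N.natDegree + 1
          = N.natTrailingDegree + ((N.natDegree - N.natTrailingDegree) + 1) by omega] at hp
      rw [TLCAux.sum_range_shift _ N.natTrailingDegree ((N.natDegree - N.natTrailingDegree) + 1)
        (fun b hb => by
          rw [Polynomial.coeff_eq_zero_of_lt_natTrailingDegree hb, zero_mul])] at hp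
      have heq : ∀ a ∈ Finset.range ((N.natDegree - N.natTrailingDegree) + 1),
          N.coeff (N.natTrailingDegree + a) * s (x - N.natTrailingDegree + (N.natTrailingDegree + a))
            = N.coeff (N.natTrailingDegree + a) * s (x + a) := by
        intro a ha
        rw [show x - N.natTrailingDegree + (N.natTrailingDegree + a) = x + a by omega]
      rw [Finset.sum_congr rfl heq] at hp
      exact hp
    have hwall := TLCAux.bridge2 s (N.natDegree - N.natTrailingDegree) l
      (N.natTrailingDegree + 1) (fun a => N.coeff (N.natTrailingDegree + a))
      (fun a ha => Polynomial.coeff_eq_zero_of_natDegree_lt (by omega))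
      ⟨0, by simpa using hv0⟩
      (fun x hx1 hx2 => hrel x hx1 (by omega)) (by omega)
    obtain ⟨i, j, hil, hjl, hne⟩ := hRHS (N.natDegree - N.natTrailingDegree)
      ((N.natTrailingDegree + 1) + (N.natDegree - N.natTrailingDegree) + l) (by omega)
    exact hne (hwall i j hil hjl)
end

section
/- Let W be the number wall of a bi-infinite sequence over a field, and suppose it contains a window of side length l ≥ 1 with inner frame entries A_k (top), B_k (left), C_k (right), D_k (bottom) for 0 ≤ k ≤ l+1, indexed with origins at the top-left and bottom-right. Then each of the four inner-frame edges is a geometric progression: there exist nonzero ratios P, Q, R, S with A_{k+1} = P·A_k, B_{k+1} = Q·B_k, C_{k+1} = R·C_k, D_{k+1} = S·D_k, and these ratios satisfy PS/(QR) = (−1)^l. -/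
set_option linter.unusedSectionVars false
set_option maxHeartbeats 1000000

namespace NWA

variable {K : Type*} [Field K]

/-- Toeplitz matrix `(s (i - j + n))` of size `N`. -/
noncomputable def toep (s : ℤ → K) (N : ℕ) (n : ℤ) : Matrix (Fin N) (Fin N) K :=
  Matrix.of fun i j => s ((i : ℤ) - (j : ℤ) + n)

@[simp] lemma toep_apply (s : ℤ → K) (N : ℕ) (n : ℤ) (i j : Fin N) :
    toep s N n i j = s ((i : ℤ) - (j : ℤ) + n) := rfl

lemma neg_one_pow_add_two_mul (x m : ℕ) : (-1 : K) ^ (x + 2 * m) = (-1) ^ x := by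
  rw [pow_add, pow_mul, neg_one_sq, one_pow, mul_one]

/-- Laplace-style: determinant with one row replaced by a single basis-ish vector. -/
lemma det_updateRow_single {N : ℕ} (A : Matrix (Fin (N + 1)) (Fin (N + 1)) K)
    (i j : Fin (N + 1)) (c : K) :
    (A.updateRow i (Pi.single j c)).det
      = c * (-1) ^ ((i : ℕ) + (j : ℕ)) * (A.submatrix i.succAbove j.succAbove).det := by
  have hsub : ∀ j' : Fin (N + 1),
      (A.updateRow i (Pi.single j c)).submatrix i.succAbove j'.succAbove
        = A.submatrix i.succAbove j'.succAbove := by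
    intro j'
    ext a b
    simp [Matrix.submatrix_apply, Matrix.updateRow_ne (Fin.succAbove_ne i a)]
  rw [Matrix.det_succ_row _ i]
  rw [Finset.sum_eq_single j]
  · rw [hsub]
    simp only [Matrix.updateRow_self, Pi.single_eq_same]
    ring
  · intro b _ hb
    rw [hsub]
    simp [Matrix.updateRow_self, Pi.single_eq_of_ne hb]

  · simp

lemma det_updateColumn_single {N : ℕ} (A : Matrix (Fin (N + 1)) (Fin (N + 1)) K)
    (i j : Fin (N + 1)) (c : K) :
    (A.updateCol j (Pi.single i c)).det
      = c * (-1) ^ ((i : ℕ) + (j : ℕ)) * (A.submatrix i.succAbove j.succAbove).det := by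
  rw [← Matrix.det_transpose, ← Matrix.updateRow_transpose,
    det_updateRow_single A.transpose j i c, add_comm (j : ℕ) (i : ℕ), ← Matrix.transpose_submatrix,
    Matrix.det_transpose]

/-- Block-triangular determinant: zero top-right corner (rows `< c`, columns `≥ c`). -/
lemma det_block (c b : ℕ) (Z : Matrix (Fin (c + b)) (Fin (c + b)) K)
    (h : ∀ i j : Fin (c + b), (i : ℕ) < c → c ≤ (j : ℕ) → Z i j = 0) :
    Z.det = (Z.submatrix (Fin.castAdd b) (Fin.castAdd b)).det
      * (Z.submatrix (Fin.natAdd c) (Fin.natAdd c)).det := by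
  have e : Fin c ⊕ Fin b ≃ Fin (c + b) := finSumFinEquiv
  rw [← Matrix.det_submatrix_equiv_self finSumFinEquiv Z]
  have hZ : Z.submatrix finSumFinEquiv finSumFinEquiv
      = Matrix.fromBlocks (Z.submatrix (Fin.castAdd b) (Fin.castAdd b)) 0
        (Z.submatrix (Fin.natAdd c) (Fin.castAdd b))
        (Z.submatrix (Fin.natAdd c) (Fin.natAdd c)) := by
    ext i j
    rcases i with i | i <;> rcases j with j | j <;>
      simp [Matrix.fromBlocks, Matrix.submatrix_apply]
    exact h _ _ (by simp) (by simp)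
  rw [hZ, Matrix.det_fromBlocks_zero₁₂]

lemma rot_apply (n t : ℕ) (i : Fin (n + 1)) :
    ((((finRotate (n + 1)) ^ t) i : Fin (n + 1)) : ℕ) = ((i : ℕ) + t) % (n + 1) := by
  induction t generalizing i with
  | zero => simp [Nat.mod_eq_of_lt i.isLt]
  | succ t ih =>
    rw [pow_succ, Equiv.Perm.mul_apply, ih, finRotate_succ_apply, Fin.val_add, Fin.val_one',
      Nat.mod_add_mod, show (i : ℕ) + 1 % (n + 1) + t = (i : ℕ) + t + 1 % (n + 1) from by ring,
      Nat.add_mod_mod, Nat.add_assoc]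


lemma det_corner (c a : ℕ) (Y : Matrix (Fin (c + a)) (Fin (c + a)) K)
    (h : ∀ i j : Fin (c + a), a ≤ (i : ℕ) → c ≤ (j : ℕ) → Y i j = 0) :
    Y.det = (-1) ^ (a * c)
      * (Matrix.of fun i j : Fin c => Y ⟨a + (i : ℕ), by omega⟩ ⟨(j : ℕ), by omega⟩).det
      * (Matrix.of fun i j : Fin a => Y ⟨(i : ℕ), by omega⟩ ⟨c + (j : ℕ), by omega⟩).det := by
  cases a with
  | zero =>
    have h1 : (Matrix.of fun i j : Fin c =>
        Y ⟨0 + (i : ℕ), by omega⟩ ⟨(j : ℕ), by omega⟩) = Y := by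
      ext i j
      simp only [Matrix.of_apply]
      congr 1 <;> apply Fin.ext <;> simp
    rw [h1]
    simp [Matrix.det_fin_zero]
  | succ a' =>
    set n := c + a' with hn
    set σ : Equiv.Perm (Fin (c + (a' + 1))) := (finRotate (n + 1)) ^ (a' + 1) with hσ
    have hσv : ∀ i : Fin (c + (a' + 1)), ((σ i : Fin (c + (a' + 1))) : ℕ)
        = ((i : ℕ) + (a' + 1)) % (n + 1) :=
      fun i => rot_apply n (a' + 1) i
    have hsign : ((Equiv.Perm.sign σ : ℤˣ) : K) = (-1) ^ (n * (a' + 1)) := by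
      have h1 : (Equiv.Perm.sign ((finRotate (n + 1)) ^ (a' + 1) : Equiv.Perm (Fin (n + 1))))
          = (-1 : ℤˣ) ^ (n * (a' + 1)) := by
        rw [map_pow, sign_finRotate, ← pow_mul, Nat.add_sub_cancel]
      have h2 : Equiv.Perm.sign σ = (-1 : ℤˣ) ^ (n * (a' + 1)) := h1
      rw [h2]
      push_cast
      rfl
    have hperm := Matrix.det_permute σ Y
    have hYd : Y.det = (-1) ^ (n * (a' + 1)) * (Y.submatrix σ id).det := by
      rw [hperm, hsign, ← mul_assoc, ← pow_add,
        show n * (a' + 1) + n * (a' + 1) = 0 + 2 * (n * (a' + 1)) from by ring,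
        neg_one_pow_add_two_mul, pow_zero, one_mul]
    have hblock := det_block c (a' + 1) (Y.submatrix σ id) ?_
    · have hTL : (Y.submatrix (⇑σ) id).submatrix (Fin.castAdd (a' + 1)) (Fin.castAdd (a' + 1))
          = Matrix.of fun i j : Fin c =>
              Y ⟨a' + 1 + (i : ℕ), by omega⟩ ⟨(j : ℕ), by omega⟩ := by
        ext i j
        have hr : (σ (Fin.castAdd (a' + 1) i))
            = (⟨a' + 1 + (i : ℕ), by omega⟩ : Fin (c + (a' + 1))) := by
          apply Fin.ext
          rw [hσv]
          simp only [Fin.coe_castAdd]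
          rw [Nat.mod_eq_of_lt (by omega)]
          omega
        have hc2 : (Fin.castAdd (a' + 1) j : Fin (c + (a' + 1)))
            = (⟨(j : ℕ), by omega⟩ : Fin (c + (a' + 1))) := Fin.ext (by simp)
        simp only [Matrix.submatrix_apply, Matrix.of_apply, id_eq, hr, hc2]
      have hBR : (Y.submatrix (⇑σ) id).submatrix (Fin.natAdd c) (Fin.natAdd c)
          = Matrix.of fun i j : Fin (a' + 1) =>
              Y ⟨(i : ℕ), by omega⟩ ⟨c + (j : ℕ), by omega⟩ := by
        ext i j
        have hr : (σ (Fin.natAdd c i)) = (⟨(i : ℕ), by omega⟩ : Fin (c + (a' + 1))) := by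
          apply Fin.ext
          rw [hσv]
          simp only [Fin.coe_natAdd]
          rw [show c + (i : ℕ) + (a' + 1) = (n + 1) + (i : ℕ) from by omega, Nat.add_mod_left,
            Nat.mod_eq_of_lt (by omega)]
        have hc2 : (Fin.natAdd c j : Fin (c + (a' + 1)))
            = (⟨c + (j : ℕ), by omega⟩ : Fin (c + (a' + 1))) := Fin.ext (by simp)
        simp only [Matrix.submatrix_apply, Matrix.of_apply, id_eq, hr, hc2]
      have hsgn : (-1 : K) ^ (n * (a' + 1)) = (-1) ^ ((a' + 1) * c) := by
        rcases Nat.even_or_odd a' with ⟨m, hm⟩ | ⟨m, hm⟩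
        · rw [show n * (a' + 1) = (a' + 1) * c + 2 * (m * (a' + 1)) from by
            rw [hn, hm]; ring, neg_one_pow_add_two_mul]
        · rw [show n * (a' + 1) = (a' + 1) * c + 2 * ((2 * m + 1) * (m + 1)) from by
            rw [hn, hm]; ring, neg_one_pow_add_two_mul]
      rw [hYd, hblock, hTL, hBR, hsgn]
      ring
    · intro i j hi hj
      simp only [Matrix.submatrix_apply, id_eq]
      refine h _ _ ?_ hj
      rw [hσv]
      rw [Nat.mod_eq_of_lt (by omega)]
      omega

lemma toep_sub_ss (s : ℤ → K) (N : ℕ) (n : ℤ) :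
    (toep s (N + 1) n).submatrix Fin.succ Fin.succ = toep s N n := by
  ext i j
  simp only [Matrix.submatrix_apply, toep_apply, Matrix.of_apply]
  congr 1
  push_cast [Fin.val_succ]
  ring

lemma toep_sub_sc (s : ℤ → K) (N : ℕ) (n : ℤ) :
    (toep s (N + 1) n).submatrix Fin.succ Fin.castSucc = toep s N (n + 1) := by
  ext i j
  simp only [Matrix.submatrix_apply, toep_apply, Matrix.of_apply]
  congr 1
  push_cast [Fin.val_succ, Fin.coe_castSucc]
  ring

lemma toep_sub_cs (s : ℤ → K) (N : ℕ) (n : ℤ) :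
    (toep s (N + 1) n).submatrix Fin.castSucc Fin.succ = toep s N (n - 1) := by
  ext i j
  simp only [Matrix.submatrix_apply, toep_apply, Matrix.of_apply]
  congr 1
  push_cast [Fin.val_succ, Fin.coe_castSucc]
  ring

/-- The cofactor kernel vector of the rows `1, …, M` of `toep s (M+1) n₀`. -/
noncomputable def uvec (s : ℤ → K) (n₀ : ℤ) (M : ℕ) (j : Fin (M + 1)) : K :=
  ((toep s (M + 1) n₀).updateRow 0 (Pi.single j 1)).det

/-- The associated linear form applied to the shifted sequence. -/
noncomputable def evalu (s : ℤ → K) (n₀ : ℤ) (M : ℕ) (t : ℤ) : K :=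
  ∑ j : Fin (M + 1), uvec s n₀ M j * s (t - (j : ℤ))

lemma det_updateRow_linear {N : ℕ} (A : Matrix (Fin N) (Fin N) K) (r : Fin N)
    (x : Fin N → K) :
    (A.updateRow r x).det = ∑ j : Fin N, x j * (A.updateRow r (Pi.single j 1)).det := by
  have hx : x = ∑ j : Fin N, Pi.single j (x j) := by
    rw [Finset.univ_sum_single]
  have key : ∀ (S : Finset (Fin N)),
      (A.updateRow r (∑ j ∈ S, Pi.single j (x j))).det
        = ∑ j ∈ S, x j * (A.updateRow r (Pi.single j 1)).det := by
    intro S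
    induction S using Finset.induction_on with
    | empty =>
      simp only [Finset.sum_empty]
      apply Matrix.det_eq_zero_of_row_eq_zero r
      intro j
      simp [Matrix.updateRow_self]
    | @insert k T hk ih =>
      have hsingle : (Pi.single k (x k) : Fin N → K) = x k • (Pi.single k 1 : Fin N → K) := by
        funext j
        rcases eq_or_ne j k with rfl | hj
        · simp
        · simp [Pi.single_eq_of_ne hj]
      rw [Finset.sum_insert hk, Finset.sum_insert hk, Matrix.det_updateRow_add, ih, hsingle,
        Matrix.det_updateRow_smul]
  have := key Finset.univ
  rw [← hx] at this
  exact this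

lemma evalu_eq_det (s : ℤ → K) (n₀ : ℤ) (M : ℕ) (t : ℤ) :
    evalu s n₀ M t = ((toep s (M + 1) n₀).updateRow 0 (fun j => s (t - (j : ℤ)))).det := by
  rw [det_updateRow_linear, evalu]
  exact Finset.sum_congr rfl fun j _ => mul_comm _ _

lemma uvec_zero (s : ℤ → K) (n₀ : ℤ) (M : ℕ) :
    uvec s n₀ M 0 = (toep s M n₀).det := by
  rw [uvec, det_updateRow_single, Fin.succAbove_zero, toep_sub_ss]
  simp

lemma uvec_last (s : ℤ → K) (n₀ : ℤ) (M : ℕ) :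
    uvec s n₀ M (Fin.last M) = (-1) ^ M * (toep s M (n₀ + 1)).det := by
  rw [uvec, det_updateRow_single, Fin.succAbove_zero, Fin.succAbove_last, toep_sub_sc]
  simp

lemma colstep {M : ℕ} (s : ℤ → K) (n₀ : ℤ) (T : Matrix (Fin (M + 1)) (Fin (M + 1)) K)
    (hdet : T.det = 0) (q i₀ : Fin (M + 1)) (v : K)
    (hcomb : (fun k => ∑ j, uvec s n₀ M j • T k j) = Pi.single i₀ v)
    (hmin : (T.submatrix i₀.succAbove q.succAbove).det ≠ 0) : v = 0 := by
  have h1 := Matrix.det_updateCol_sum T q (uvec s n₀ M)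
  rw [hdet, smul_zero, hcomb, det_updateColumn_single] at h1
  rcases mul_eq_zero.mp h1 with h2 | h2
  · rcases mul_eq_zero.mp h2 with h3 | h3
    · exact h3
    · exact absurd h3 (pow_ne_zero _ (by norm_num))
  · exact absurd h2 hmin

lemma evalu_dup (s : ℤ → K) (n₀ : ℤ) (M : ℕ) :
    ∀ r : ℕ, 1 ≤ r → r ≤ M → evalu s n₀ M (n₀ + r) = 0 := by
  intro r h1 h2
  rw [evalu_eq_det]
  set rf : Fin (M + 1) := ⟨r, by omega⟩ with hrf
  have h0r : (0 : Fin (M + 1)) ≠ rf := by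
    intro h
    have := congrArg Fin.val h
    simp [hrf] at this
    omega
  have hrow : (fun j : Fin (M + 1) => s (n₀ + (r : ℤ) - (j : ℤ))) = (toep s (M + 1) n₀) rf := by
    funext j
    simp only [toep_apply, Matrix.of_apply]
    congr 1
    have hv : ((rf : Fin (M + 1)) : ℤ) = (r : ℤ) := rfl
    rw [hv]
    ring
  rw [hrow]
  apply Matrix.det_zero_of_row_eq h0r
  rw [Matrix.updateRow_self, Matrix.updateRow_ne (Ne.symm h0r)]

lemma evalu_window (s : ℤ → K) (n₀ : ℤ) (M l : ℕ) (hl : 1 ≤ l)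
    (hwin : ∀ k : ℕ, k < l → (toep s (M + 1) (n₀ + k)).det = 0)
    (hA : ∀ k : ℕ, k ≤ l + 1 → (toep s M (n₀ - 1 + k)).det ≠ 0) :
    ∀ r : ℕ, r < M + l → evalu s n₀ M (n₀ + r) = 0 := by
  intro r
  induction r using Nat.strong_induction_on with
  | _ r ih =>
    intro hr
    rcases Nat.lt_or_ge r 1 with h1 | h1
    · -- r = 0
      have hr0 : r = 0 := by omega
      subst hr0
      have hT : (toep s (M + 1) (n₀ + (0 : ℕ))).det = 0 := hwin 0 hl
      have hcomb : (fun k => ∑ j, uvec s n₀ M j • (toep s (M + 1) (n₀ + (0 : ℕ))) k j)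
          = Pi.single (0 : Fin (M + 1)) (evalu s n₀ M (n₀ + (0 : ℕ))) := by
        funext k
        rcases eq_or_ne k 0 with rfl | hk
        · rw [Pi.single_eq_same, evalu]
          apply Finset.sum_congr rfl
          intro j _
          rw [smul_eq_mul]
          congr 1
          simp only [toep_apply, Matrix.of_apply]
          congr 1
          push_cast [Fin.val_zero]
          ring
        · rw [Pi.single_eq_of_ne hk]
          have hk1 : 1 ≤ (k : ℕ) := by
            rcases Nat.eq_zero_or_pos (k : ℕ) with h | h
            · exact absurd (Fin.ext h) hk
            · exact h
          have := evalu_dup s n₀ M (k : ℕ) hk1 (by omega)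
          rw [evalu] at this
          rw [← this]
          apply Finset.sum_congr rfl
          intro j _
          rw [smul_eq_mul]
          congr 1
          simp only [toep_apply, Matrix.of_apply]
          congr 1
          push_cast [Fin.val_zero]
          ring
      have hmin : ((toep s (M + 1) (n₀ + (0 : ℕ))).submatrix
          (Fin.succAbove 0) (Fin.succAbove (Fin.last M))).det ≠ 0 := by
        rw [Fin.succAbove_zero, Fin.succAbove_last, toep_sub_sc]
        have := hA 2 (by omega)
        rwa [show n₀ - 1 + ((2 : ℕ) : ℤ) = n₀ + (0 : ℕ) + 1 from by push_cast; ring] at this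
      exact colstep s n₀ _ hT (Fin.last M) 0 _ hcomb hmin
    · rcases le_or_gt r M with h2 | h2
      · exact evalu_dup s n₀ M r h1 h2
      · -- r ≥ M + 1
        set k := r - M with hk
        have hk1 : 1 ≤ k := by omega
        have hkl : k < l := by omega
        have hT : (toep s (M + 1) (n₀ + k)).det = 0 := hwin k hkl
        have hcomb : (fun k' => ∑ j, uvec s n₀ M j • (toep s (M + 1) (n₀ + k)) k' j)
            = Pi.single (Fin.last M) (evalu s n₀ M (n₀ + r)) := by
          funext k'
          have hsum : ∑ j, uvec s n₀ M j • (toep s (M + 1) (n₀ + k)) k' j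
              = evalu s n₀ M (n₀ + (k + (k' : ℕ) : ℕ)) := by
            rw [evalu]
            apply Finset.sum_congr rfl
            intro j _
            rw [smul_eq_mul]
            congr 1
            simp only [toep_apply, Matrix.of_apply]
            congr 1
            push_cast
            ring
          rcases eq_or_ne k' (Fin.last M) with rfl | hk'
          · rw [Pi.single_eq_same, hsum]
            congr 2
            simp [Fin.val_last]
            omega
          · rw [Pi.single_eq_of_ne hk', hsum]
            have hklt : (k' : ℕ) < M := by
              have := k'.isLt
              rcases Nat.lt_or_ge (k' : ℕ) M with h | h
              · exact h
              · exact absurd (Fin.ext (by omega : (k' : ℕ) = M)) hk'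
            exact ih (k + (k' : ℕ)) (by omega) (by omega)
        have hmin : ((toep s (M + 1) (n₀ + k)).submatrix
            (Fin.succAbove (Fin.last M)) (Fin.succAbove 0)).det ≠ 0 := by
          rw [Fin.succAbove_zero, Fin.succAbove_last, toep_sub_cs]
          have := hA k (by omega)
          rwa [show n₀ - 1 + (k : ℤ) = n₀ + (k : ℕ) - 1 from by push_cast; ring] at this
        exact colstep s n₀ _ hT 0 (Fin.last M) _ hcomb hmin

lemma A_edge (s : ℤ → K) (n₀ : ℤ) (M l : ℕ) (hl : 1 ≤ l)
    (hwin : ∀ k : ℕ, k < l → (toep s (M + 1) (n₀ + k)).det = 0)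
    (hA : ∀ k : ℕ, k ≤ l + 1 → (toep s M (n₀ - 1 + k)).det ≠ 0) :
    ∀ k : ℕ, k ≤ l →
      (toep s M n₀).det * (toep s M (n₀ + k)).det
        = (toep s M (n₀ + 1)).det * (toep s M (n₀ + k - 1)).det := by
  intro k hk
  have hsub : ∀ e : Fin M → Fin (M + 1),
      ((toep s (M + 1) (n₀ + k - 1)).updateRow 0 (Pi.single (0 : Fin (M + 1)) 1)).submatrix
          Fin.succ e
        = (toep s (M + 1) (n₀ + k - 1)).submatrix Fin.succ e := by
    intro e
    ext a b
    simp [Matrix.updateRow_ne (Fin.succ_ne_zero a)]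
  have hdetZ : ((toep s (M + 1) (n₀ + k - 1)).updateRow 0 (Pi.single (0 : Fin (M + 1)) 1)).det
      = (toep s M (n₀ + k - 1)).det := by
    rw [det_updateRow_single, Fin.succAbove_zero, toep_sub_ss]
    simp
  have hcomb : (fun k' => ∑ j, uvec s n₀ M j •
        ((toep s (M + 1) (n₀ + k - 1)).updateRow 0 (Pi.single (0 : Fin (M + 1)) 1)) k' j)
      = Pi.single (0 : Fin (M + 1)) (uvec s n₀ M 0) := by
    funext k'
    rcases eq_or_ne k' 0 with rfl | hk'
    · rw [Pi.single_eq_same, Finset.sum_eq_single (0 : Fin (M + 1))]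
      · simp [Matrix.updateRow_self]
      · intro b _ hb
        simp [Matrix.updateRow_self, Pi.single_eq_of_ne hb]
      · simp
    · rw [Pi.single_eq_of_ne hk']
      have hk1 : 1 ≤ (k' : ℕ) := by
        rcases Nat.eq_zero_or_pos (k' : ℕ) with h | h
        · exact absurd (Fin.ext h) hk'
        · exact h
      have hz := evalu_window s n₀ M l hl hwin hA (k + (k' : ℕ) - 1) (by omega)
      rw [evalu] at hz
      rw [← hz]
      apply Finset.sum_congr rfl
      intro j _
      rw [smul_eq_mul]
      congr 1
      rw [Matrix.updateRow_ne hk']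
      simp only [toep_apply, Matrix.of_apply]
      congr 1
      push_cast [Nat.cast_sub (by omega : 1 ≤ k + (k' : ℕ))]
      ring
  have h1 := Matrix.det_updateCol_sum
    ((toep s (M + 1) (n₀ + k - 1)).updateRow 0 (Pi.single (0 : Fin (M + 1)) 1))
    (Fin.last M) (uvec s n₀ M)
  rw [hcomb, det_updateColumn_single, hdetZ] at h1
  rw [show ((0 : Fin (M + 1)).succAbove : Fin M → Fin (M + 1)) = Fin.succ from
    Fin.succAbove_zero, show ((Fin.last M).succAbove : Fin M → Fin (M + 1)) = Fin.castSucc from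
    Fin.succAbove_last, hsub, toep_sub_sc,
    show n₀ + (k : ℤ) - 1 + 1 = n₀ + k from by ring, uvec_zero, uvec_last, smul_eq_mul] at h1
  simp only [Fin.val_zero, Fin.val_last, zero_add] at h1
  have hpow : ((-1 : K) ^ M) ≠ 0 := pow_ne_zero _ (by norm_num)
  apply mul_left_cancel₀ hpow
  calc (-1 : K) ^ M * ((toep s M n₀).det * (toep s M (n₀ + k)).det)
      = (toep s M n₀).det * (-1 : K) ^ M * (toep s M (n₀ + k)).det := by ring
    _ = (-1) ^ M * (toep s M (n₀ + 1)).det * (toep s M (n₀ + k - 1)).det := h1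
    _ = (-1 : K) ^ M * ((toep s M (n₀ + 1)).det * (toep s M (n₀ + k - 1)).det) := by ring

/-- The matrix `toep s N ν` with all columns `c ≥ M` replaced by the `uvec`-combinations
(entries become values of `evalu`). -/
noncomputable def ymod (s : ℤ → K) (n₀ : ℤ) (M N : ℕ) (ν : ℤ) : Matrix (Fin N) (Fin N) K :=
  Matrix.of fun i c =>
    if (c : ℕ) < M then s ((i : ℤ) - (c : ℤ) + ν)
    else evalu s n₀ M (ν + M + (i : ℤ) - (c : ℤ))

/-- Partially modified matrix: columns `c` with `M ≤ c` and `N - d ≤ c` are replaced. -/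
noncomputable def ypart (s : ℤ → K) (n₀ : ℤ) (M N : ℕ) (ν : ℤ) (d : ℕ) :
    Matrix (Fin N) (Fin N) K :=
  Matrix.of fun i c =>
    if (c : ℕ) < M ∨ (c : ℕ) < N - d then s ((i : ℤ) - (c : ℤ) + ν)
    else evalu s n₀ M (ν + M + (i : ℤ) - (c : ℤ))

lemma sum_window {N M dd : ℕ} (h : M + dd < N) (f : Fin (M + 1) → K) (X : Fin N → K) :
    ∑ r : Fin N, (if h2 : dd ≤ (r : ℕ) ∧ (r : ℕ) ≤ M + dd
        then f ⟨(r : ℕ) - dd, by omega⟩ else 0) * X r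
      = ∑ p : Fin (M + 1), f p * X ⟨dd + (p : ℕ), by omega⟩ := by
  classical
  set e : Fin (M + 1) → Fin N := fun p => ⟨dd + (p : ℕ), by omega⟩ with he
  have hinj : ∀ x ∈ Finset.univ, ∀ y ∈ Finset.univ, e x = e y → x = y := by
    intro x _ y _ hxy
    have := congrArg Fin.val hxy
    simp only [he] at this
    exact Fin.ext (by omega)
  have hzero : ∀ r ∈ Finset.univ, r ∉ Finset.univ.image e →
      (if h2 : dd ≤ (r : ℕ) ∧ (r : ℕ) ≤ M + dd
        then f ⟨(r : ℕ) - dd, by omega⟩ else 0) * X r = 0 := by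
    intro r _ hr
    rcases Nat.decEq 0 0 with _ | _
    all_goals {
      rw [dif_neg, zero_mul]
      intro hcond
      apply hr
      refine Finset.mem_image.mpr ⟨⟨(r : ℕ) - dd, by omega⟩, Finset.mem_univ _, ?_⟩
      apply Fin.ext
      simp only [he]
      omega
    }
  rw [← Finset.sum_subset (Finset.subset_univ (Finset.univ.image e)) hzero,
    Finset.sum_image hinj]
  apply Finset.sum_congr rfl
  intro p _
  rw [dif_pos (by constructor <;> simp [he] <;> omega)]
  congr 1
  congr 1
  apply Fin.ext
  simp [he]

lemma det_ypart (s : ℤ → K) (n₀ : ℤ) (M N : ℕ) (ν : ℤ) (hMN : M ≤ N) :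
    ∀ d : ℕ, d ≤ N - M →
      (ypart s n₀ M N ν d).det = (uvec s n₀ M (Fin.last M)) ^ d * (toep s N ν).det := by
  intro d
  induction d with
  | zero =>
    intro _
    have : ypart s n₀ M N ν 0 = toep s N ν := by
      ext i c
      rw [ypart, toep]
      simp only [Matrix.of_apply]
      rw [if_pos (Or.inr (by omega))]
    rw [this, pow_zero, one_mul]
  | succ d ih =>
    intro hd
    set dd := N - 1 - d - M with hdd
    have hNd : N - (d + 1) = M + dd := by omega
    have hMdd : M + dd < N := by omega
    set c₀ : Fin N := ⟨M + dd, hMdd⟩ with hc₀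
    set w : Fin N → K := fun r =>
      if h2 : dd ≤ (r : ℕ) ∧ (r : ℕ) ≤ M + dd
        then uvec s n₀ M ⟨(r : ℕ) - dd, by omega⟩ else 0 with hw
    have hstep : ypart s n₀ M N ν (d + 1)
        = (ypart s n₀ M N ν d).updateCol c₀ (fun k => ∑ i, w i • ypart s n₀ M N ν d k i) := by
      ext i c
      rcases eq_or_ne c c₀ with rfl | hc
      · rw [Matrix.updateCol_self]
        have hval : ∀ r, w r • ypart s n₀ M N ν d i r
            = (if h2 : dd ≤ (r : ℕ) ∧ (r : ℕ) ≤ M + dd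
                then uvec s n₀ M ⟨(r : ℕ) - dd, by omega⟩ else 0)
              * (fun r : Fin N => s ((i : ℤ) - (r : ℤ) + ν)) r := by
          intro r
          rw [hw, smul_eq_mul]
          rcases Nat.lt_or_ge (r : ℕ) (M + dd + 1) with h | h
          · congr 1
            rw [ypart]
            simp only [Matrix.of_apply]
            rw [if_pos (Or.inr (by omega))]
          · dsimp only
            rw [dif_neg (by omega), zero_mul, zero_mul]
        simp only [hval]
        rw [sum_window hMdd]
        rw [ypart]
        simp only [Matrix.of_apply]
        rw [if_neg (by rw [hNd]; have : ((⟨M + dd, hMdd⟩ : Fin N) : ℕ) = M + dd := rfl; omega)]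
        rw [evalu]
        apply Finset.sum_congr rfl
        intro p _
        congr 1
        have hv : ((⟨dd + (p : ℕ), by omega⟩ : Fin N) : ℤ) = (dd : ℤ) + (p : ℕ) := by
          simp
        rw [hv]
        have hv2 : ((c₀ : Fin N) : ℤ) = (M : ℤ) + (dd : ℤ) := by
          rw [hc₀]
          simp
        rw [hv2]
        push_cast
        ring
      · rw [Matrix.updateCol_ne hc]
        have hcv : (c : ℕ) ≠ M + dd := fun h => hc (Fin.ext (by rw [h, hc₀]))
        rw [ypart, ypart]
        simp only [Matrix.of_apply]
        have hiff : ((c : ℕ) < M ∨ (c : ℕ) < N - (d + 1)) ↔ ((c : ℕ) < M ∨ (c : ℕ) < N - d) := by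
          rw [hNd]
          have := c.isLt
          constructor <;> intro hcase <;> omega
        by_cases hcase : (c : ℕ) < M ∨ (c : ℕ) < N - d
        · rw [if_pos hcase, if_pos (hiff.mpr hcase)]
        · rw [if_neg hcase, if_neg (fun h => hcase (hiff.mp h))]
    rw [hstep, Matrix.det_updateCol_sum, ih (by omega), smul_eq_mul, pow_succ]
    have hwc : w c₀ = uvec s n₀ M (Fin.last M) := by
      rw [hw, hc₀]
      dsimp only
      rw [dif_pos ⟨by omega, by omega⟩]
      congr 1
      apply Fin.ext
      simp [Fin.val_last]
    rw [hwc]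
    ring

lemma det_ymod (s : ℤ → K) (n₀ : ℤ) (M N : ℕ) (ν : ℤ) (hMN : M ≤ N) :
    (ymod s n₀ M N ν).det = (uvec s n₀ M (Fin.last M)) ^ (N - M) * (toep s N ν).det := by
  have h : ymod s n₀ M N ν = ypart s n₀ M N ν (N - M) := by
    ext i c
    rw [ymod, ypart]
    simp only [Matrix.of_apply]
    have : ((c : ℕ) < M ∨ (c : ℕ) < N - (N - M)) ↔ (c : ℕ) < M := by
      constructor <;> intro h <;> [skip; exact Or.inl h] <;> rcases h with h | h <;> omega
    by_cases hcase : (c : ℕ) < M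
    · rw [if_pos hcase, if_pos (this.mpr hcase)]
    · rw [if_neg hcase, if_neg (fun h2 => hcase (this.mp h2))]
  rw [h, det_ypart s n₀ M N ν hMN (N - M) le_rfl]

lemma det_ymod_eval (s : ℤ → K) (n₀ : ℤ) (M l : ℕ) (a b : ℕ) (w : ℤ)
    (hb : (b : ℤ) ≤ w + 1) (ha : (a : ℤ) + w ≤ l)
    (hzero : ∀ r : ℕ, r < M + l → evalu s n₀ M (n₀ + r) = 0) :
    (ymod s n₀ M (M + b + a) (n₀ + w)).det
      = (-1) ^ (a * (M + b)) * (evalu s n₀ M (n₀ + w - b)) ^ a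
        * (evalu s n₀ M (n₀ + w + M + a)) ^ b * (toep s M (n₀ + w + a)).det := by
  have hvanish : ∀ z : ℤ, 0 ≤ z → z < M + l → evalu s n₀ M (n₀ + z) = 0 := by
    intro z h0 h1
    have h2 := hzero z.toNat (by omega)
    rwa [Int.toNat_of_nonneg h0] at h2
  set ν := n₀ + w with hν
  set Y := ymod s n₀ M (M + b + a) ν with hY
  have hcorner := det_corner (M + b) a Y ?_
  · rw [hcorner]
    -- top-right a × a block: upper triangular with diagonal evalu (ν - b)
    have hTR : (Matrix.of fun i j : Fin a =>
        Y ⟨(i : ℕ), by omega⟩ ⟨(M + b) + (j : ℕ), by omega⟩).det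
          = (evalu s n₀ M (n₀ + w - b)) ^ a := by
      have htri : (Matrix.of fun i j : Fin a =>
          Y ⟨(i : ℕ), by omega⟩ ⟨(M + b) + (j : ℕ), by omega⟩).BlockTriangular id := by
        intro i j hij
        simp only [Matrix.of_apply, hY, ymod]
        rw [if_neg (by simp; omega)]
        rw [show ν + (M : ℕ) + ((⟨(i : ℕ), by omega⟩ : Fin (M + b + a)) : ℤ)
            - ((⟨(M + b) + (j : ℕ), by omega⟩ : Fin (M + b + a)) : ℤ)
          = n₀ + (w - b + (i : ℕ) - (j : ℕ)) from by push_cast; ring]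
        exact hvanish _ (by simp only [id] at hij; omega) (by simp only [id] at hij; omega)
      rw [Matrix.det_of_upperTriangular htri]
      have hdiag : ∀ i : Fin a, (Matrix.of fun i j : Fin a =>
          Y ⟨(i : ℕ), by omega⟩ ⟨(M + b) + (j : ℕ), by omega⟩) i i
            = evalu s n₀ M (n₀ + w - b) := by
        intro i
        simp only [Matrix.of_apply, hY, ymod]
        rw [if_neg (by simp; omega)]
        congr 1
        push_cast
        ring
      rw [Finset.prod_congr rfl (fun i _ => hdiag i), Finset.prod_const, Finset.card_univ,
        Fintype.card_fin]
    -- bottom-left (M+b) × (M+b) block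
    have hBL : (Matrix.of fun i j : Fin (M + b) =>
        Y ⟨a + (i : ℕ), by omega⟩ ⟨(j : ℕ), by omega⟩).det
          = (toep s M (n₀ + w + a)).det * (evalu s n₀ M (n₀ + w + M + a)) ^ b := by
      have hblk := det_block M b (Matrix.of fun i j : Fin (M + b) =>
        Y ⟨a + (i : ℕ), by omega⟩ ⟨(j : ℕ), by omega⟩) ?_
      · rw [hblk]
        have h11 : ((Matrix.of fun i j : Fin (M + b) =>
            Y ⟨a + (i : ℕ), by omega⟩ ⟨(j : ℕ), by omega⟩).submatrix
              (Fin.castAdd b) (Fin.castAdd b)) = toep s M (n₀ + w + a) := by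
          ext i j
          simp only [Matrix.submatrix_apply, Matrix.of_apply, hY, ymod, toep_apply,
            Fin.coe_castAdd]
          rw [if_pos (by exact j.isLt)]
          congr 1
          push_cast
          ring
        have h22 : ∀ i j : Fin b, ((Matrix.of fun i j : Fin (M + b) =>
            Y ⟨a + (i : ℕ), by omega⟩ ⟨(j : ℕ), by omega⟩).submatrix
              (Fin.natAdd M) (Fin.natAdd M)) i j
            = evalu s n₀ M (n₀ + (w + M + a + (i : ℕ) - (j : ℕ))) := by
          intro i j
          simp only [Matrix.submatrix_apply, Matrix.of_apply, hY, ymod, Fin.coe_natAdd]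
          rw [if_neg (by omega)]
          congr 1
          push_cast
          ring
        have htri2 : ((Matrix.of fun i j : Fin (M + b) =>
            Y ⟨a + (i : ℕ), by omega⟩ ⟨(j : ℕ), by omega⟩).submatrix
              (Fin.natAdd M) (Fin.natAdd M)).BlockTriangular OrderDual.toDual := by
          intro i j hij
          have hij' : (i : ℕ) < (j : ℕ) := hij
          rw [h22]
          rw [show n₀ + (w + M + a + (i : ℕ) - (j : ℕ))
            = n₀ + (w + M + a + (i : ℕ) - (j : ℕ)) from rfl]
          exact hvanish _ (by omega) (by omega)
        rw [Matrix.det_of_lowerTriangular _ htri2, h11]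
        congr 1
        have : ∀ i : Fin b, ((Matrix.of fun i j : Fin (M + b) =>
            Y ⟨a + (i : ℕ), by omega⟩ ⟨(j : ℕ), by omega⟩).submatrix
              (Fin.natAdd M) (Fin.natAdd M)) i i = evalu s n₀ M (n₀ + w + M + a) := by
          intro i
          rw [h22]
          congr 1
          ring
        rw [Finset.prod_congr rfl (fun i _ => this i), Finset.prod_const, Finset.card_univ,
          Fintype.card_fin]
      · intro i j hi hj
        simp only [Matrix.of_apply, hY, ymod]
        rw [if_neg (by omega)]
        rw [show ν + (M : ℕ) + ((⟨a + (i : ℕ), by omega⟩ : Fin (M + b + a)) : ℤ)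
            - ((⟨(j : ℕ), by omega⟩ : Fin (M + b + a)) : ℤ)
          = n₀ + (w + M + a + (i : ℕ) - (j : ℕ)) from by push_cast; ring]
        exact hvanish _ (by omega) (by omega)
    rw [hTR, hBL]
    ring
  · intro i j hi hj
    simp only [hY, ymod, Matrix.of_apply]
    rw [if_neg (by omega)]
    rw [show ν + (M : ℕ) + (i : ℤ) - (j : ℤ) = n₀ + (w + M + (i : ℕ) - (j : ℕ)) from by
      push_cast; ring]
    have hi' := i.isLt
    have hj' := j.isLt
    exact hvanish _ (by omega) (by omega)

lemma key_formula (s : ℤ → K) (n₀ : ℤ) (M l : ℕ) (a b : ℕ) (w : ℤ)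
    (hb : (b : ℤ) ≤ w + 1) (ha : (a : ℤ) + w ≤ l)
    (hzero : ∀ r : ℕ, r < M + l → evalu s n₀ M (n₀ + r) = 0) :
    (uvec s n₀ M (Fin.last M)) ^ (a + b) * (toep s (M + b + a) (n₀ + w)).det
      = (-1) ^ (a * (M + b)) * (evalu s n₀ M (n₀ + w - b)) ^ a
        * (evalu s n₀ M (n₀ + w + M + a)) ^ b * (toep s M (n₀ + w + a)).det := by
  have h1 := det_ymod s n₀ M (M + b + a) (n₀ + w) (by omega)
  have h2 := det_ymod_eval s n₀ M l a b w hb ha hzero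
  rw [show M + b + a - M = a + b from by omega] at h1
  rw [← h1, h2]

lemma wall_eq_det (s : ℤ → K) (N : ℕ) (n : ℤ) :
    numberWall s ((N : ℤ) - 1) n = (toep s N n).det := by
  cases N with
  | zero =>
    rw [numberWall]
    norm_num
  | succ N' =>
    rw [show ((N' + 1 : ℕ) : ℤ) - 1 = (N' : ℤ) from by push_cast; ring]
    rw [numberWall, if_neg (by omega), if_neg (by omega)]
    simp only [Int.toNat_natCast]
    rfl

end NWA


/-- **Frame ratio theorem.**  Suppose the number wall of `s` has a window
(square of zeros) of side `l ≥ 1` with rows `m₀, …, m₀ + l - 1` and columns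
`n₀, …, n₀ + l - 1`, whose inner frame (the bordering entries) is nonzero.
Writing `A k, B k, C k, D k` for the inner frame entries along the top, left,
right and bottom edges (with origins at the top-left and bottom-right corners),
each edge is a geometric progression, with ratios `P, Q, R, S` satisfying
`P·S/(Q·R) = (-1)^l`. -/
theorem numberWall_inner_frame_geometric {K : Type*} [Field K] (s : ℤ → K)
    (l : ℕ) (hl : 1 ≤ l) (m₀ n₀ : ℤ) (hm₀ : 0 ≤ m₀)
    (A B C D : ℕ → K)
    (hA : ∀ k : ℕ, A k = numberWall s (m₀ - 1) (n₀ - 1 + k))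
    (hB : ∀ k : ℕ, B k = numberWall s (m₀ - 1 + k) (n₀ - 1))
    (hC : ∀ k : ℕ, C k = numberWall s (m₀ + l - k) (n₀ + l))
    (hD : ∀ k : ℕ, D k = numberWall s (m₀ + l) (n₀ + l - k))
    (hwindow : ∀ i j : ℕ, i < l → j < l → numberWall s (m₀ + i) (n₀ + j) = 0)
    (hframe : ∀ k : ℕ, k ≤ l + 1 → A k ≠ 0 ∧ B k ≠ 0 ∧ C k ≠ 0 ∧ D k ≠ 0) :
    ∃ P Q R S : K, P ≠ 0 ∧ Q ≠ 0 ∧ R ≠ 0 ∧ S ≠ 0 ∧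
      (∀ k : ℕ, k ≤ l → A (k + 1) = P * A k) ∧
      (∀ k : ℕ, k ≤ l → B (k + 1) = Q * B k) ∧
      (∀ k : ℕ, k ≤ l → C (k + 1) = R * C k) ∧
      (∀ k : ℕ, k ≤ l → D (k + 1) = S * D k) ∧
      P * S / (Q * R) = (-1 : K) ^ l := by
  classical
  set M := m₀.toNat with hMdef
  have hm : (M : ℤ) = m₀ := Int.toNat_of_nonneg hm₀
  -- bridges to Toeplitz determinants
  have hA' : ∀ k : ℕ, A k = (NWA.toep s M (n₀ - 1 + k)).det := by
    intro k
    rw [hA k, show m₀ - 1 = (M : ℤ) - 1 from by omega, NWA.wall_eq_det]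
  have hB' : ∀ k : ℕ, B k = (NWA.toep s (M + k) (n₀ - 1)).det := by
    intro k
    rw [hB k, show m₀ - 1 + (k : ℤ) = ((M + k : ℕ) : ℤ) - 1 from by push_cast; omega,
      NWA.wall_eq_det]
  have hC' : ∀ k : ℕ, k ≤ l + 1 → C k = (NWA.toep s (M + l + 1 - k) (n₀ + l)).det := by
    intro k hk
    rw [hC k, show m₀ + (l : ℤ) - k = ((M + l + 1 - k : ℕ) : ℤ) - 1 from by
      push_cast [Nat.cast_sub (by omega : k ≤ M + l + 1)]; omega, NWA.wall_eq_det]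
  have hD' : ∀ k : ℕ, D k = (NWA.toep s (M + l + 1) (n₀ + l - k)).det := by
    intro k
    rw [hD k, show m₀ + (l : ℤ) = ((M + l + 1 : ℕ) : ℤ) - 1 from by push_cast; omega,
      NWA.wall_eq_det]
  have hwin : ∀ k : ℕ, k < l → (NWA.toep s (M + 1) (n₀ + k)).det = 0 := by
    intro k hk
    have h0 := hwindow 0 k hl hk
    rw [show m₀ + ((0 : ℕ) : ℤ) = ((M + 1 : ℕ) : ℤ) - 1 from by push_cast; omega,
      NWA.wall_eq_det] at h0
    exact h0
  have hAne : ∀ k : ℕ, k ≤ l + 1 → (NWA.toep s M (n₀ - 1 + k)).det ≠ 0 := by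
    intro k hk
    have := (hframe k hk).1
    rwa [hA' k] at this
  have hzero := NWA.evalu_window s n₀ M l hl hwin hAne
  set u := NWA.uvec s n₀ M (Fin.last M) with hu
  set eL := NWA.evalu s n₀ M (n₀ - 1) with heL
  set eR := NWA.evalu s n₀ M (n₀ + M + l) with heR
  set Av : ℕ → K := fun k => (NWA.toep s M (n₀ - 1 + (k : ℕ))).det with hAvdef
  have hAvEq : ∀ (k : ℕ) (z : ℤ), z = n₀ - 1 + (k : ℕ) → (NWA.toep s M z).det = Av k := by
    intro k z hz
    rw [hz, hAvdef]
  have hAvne : ∀ k : ℕ, k ≤ l + 1 → Av k ≠ 0 := fun k hk => hAne k hk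
  have huL : u = (-1) ^ M * Av 2 := by
    rw [hu, NWA.uvec_last, hAvEq 2 (n₀ + 1) (by push_cast; ring)]
  have hune : u ≠ 0 := by
    rw [huL]
    exact mul_ne_zero (pow_ne_zero _ (by norm_num)) (hAvne 2 (by omega))
  -- the A edge
  have hAgeo : ∀ k : ℕ, k ≤ l → Av 1 * Av (k + 1) = Av 2 * Av k := by
    intro k hk
    have hx := NWA.A_edge s n₀ M l hl hwin hAne k hk
    rw [hAvEq 1 n₀ (by push_cast; ring), hAvEq (k + 1) (n₀ + (k : ℕ)) (by push_cast; ring),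
      hAvEq 2 (n₀ + 1) (by push_cast; ring), hAvEq k (n₀ + (k : ℕ) - 1) (by push_cast; ring)]
      at hx
    exact hx
  -- B edge closed form
  have hBkey : ∀ q : ℕ, q ≤ l + 1 → u ^ q * B q = (-1) ^ (q * M) * eL ^ q * Av q := by
    intro q hq
    have h0 := NWA.key_formula s n₀ M l q 0 (-1) (by norm_num) (by omega) hzero
    rw [Nat.add_zero, Nat.add_zero] at h0
    rw [show n₀ + (-1 : ℤ) = n₀ - 1 from by ring] at h0
    rw [show n₀ - 1 - ((0 : ℕ) : ℤ) = n₀ - 1 from by push_cast; ring] at h0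
    rw [pow_zero, mul_one] at h0
    rw [hAvEq q (n₀ - 1 + (q : ℕ)) rfl, ← hB' q, ← hu, ← heL] at h0
    exact h0
  -- C edge closed form
  have hCkey : ∀ j : ℕ, j ≤ l + 1 → u ^ j * C (l + 1 - j) = eR ^ j * Av (l + 1) := by
    intro j hj
    have h0 := NWA.key_formula s n₀ M l 0 j (l : ℤ) (by omega) (by omega) hzero
    rw [Nat.zero_add, Nat.add_zero, Nat.zero_mul, pow_zero, pow_zero, one_mul, one_mul] at h0
    rw [show n₀ + (l : ℤ) + (M : ℕ) + ((0 : ℕ) : ℤ) = n₀ + (M : ℕ) + (l : ℕ) from by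
      push_cast; ring] at h0
    rw [hAvEq (l + 1) (n₀ + (l : ℤ) + ((0 : ℕ) : ℤ)) (by push_cast; ring), ← hu, ← heR] at h0
    have hc := hC' (l + 1 - j) (by omega)
    rw [show M + l + 1 - (l + 1 - j) = M + j from by omega] at hc
    rw [← hc] at h0
    exact h0
  -- D edge closed form
  have hDkey : ∀ k : ℕ, k ≤ l + 1 →
      u ^ (l + 1) * D k = (-1) ^ (k * (M + (l + 1 - k))) * eL ^ k * eR ^ (l + 1 - k)
        * Av (l + 1) := by
    intro k hk
    have h0 := NWA.key_formula s n₀ M l k (l + 1 - k) ((l : ℤ) - k)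
      (by push_cast [Nat.cast_sub (by omega : k ≤ l + 1)]; omega) (by omega) hzero
    rw [show k + (l + 1 - k) = l + 1 from by omega] at h0
    rw [show M + (l + 1 - k) + k = M + l + 1 from by omega] at h0
    rw [show n₀ + ((l : ℤ) - (k : ℕ)) = n₀ + (l : ℕ) - (k : ℕ) from by push_cast; ring] at h0
    rw [show n₀ + (l : ℕ) - (k : ℕ) - ((l + 1 - k : ℕ) : ℤ) = n₀ - 1 from by
      push_cast [Nat.cast_sub (by omega : k ≤ l + 1)]; ring] at h0
    rw [show n₀ + (l : ℕ) - (k : ℕ) + (M : ℕ) + (k : ℕ) = n₀ + (M : ℕ) + (l : ℕ) from by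
      push_cast; ring] at h0
    rw [hAvEq (l + 1) (n₀ + (l : ℕ) - (k : ℕ) + (k : ℕ)) (by push_cast; ring), ← hu, ← heL,
      ← heR, ← hD' k] at h0
    exact h0
  -- nonvanishing of the recurrence failures
  have heLne : eL ≠ 0 := by
    intro h0
    have h1 := hBkey 1 (by omega)
    rw [h0, pow_one, pow_one, mul_zero, zero_mul] at h1
    exact (mul_ne_zero hune (hframe 1 (by omega)).2.1) h1
  have heRne : eR ≠ 0 := by
    intro h0
    have h1 := hCkey 1 (by omega)
    rw [h0, pow_one, pow_one, zero_mul] at h1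
    exact (mul_ne_zero hune (hframe (l + 1 - 1) (by omega)).2.2.1) h1
  -- the four ratios
  refine ⟨Av 2 / Av 1, eL / Av 1, u / eR, (-1) ^ (M + l) * eL / eR,
    div_ne_zero (hAvne 2 (by omega)) (hAvne 1 (by omega)),
    div_ne_zero heLne (hAvne 1 (by omega)),
    div_ne_zero hune heRne,
    div_ne_zero (mul_ne_zero (pow_ne_zero _ (by norm_num)) heLne) heRne,
    ?_, ?_, ?_, ?_, ?_⟩
  · -- A geometric
    intro k hk
    rw [hA' (k + 1), hA' k, hAvEq (k + 1) _ rfl, hAvEq k _ rfl, div_mul_eq_mul_div,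
      eq_div_iff (hAvne 1 (by omega))]
    linear_combination hAgeo k hk
  · -- B geometric
    intro k hk
    have h1 := hBkey (k + 1) (by omega)
    have h2 := hBkey k (by omega)
    rw [show (k + 1) * M = k * M + M from by ring, pow_add] at h1
    rw [div_mul_eq_mul_div, eq_div_iff (hAvne 1 (by omega))]
    apply mul_left_cancel₀ (pow_ne_zero (k + 1) hune)
    linear_combination (Av 1) * h1 + ((-1 : K) ^ (k * M) * (-1 : K) ^ M * eL ^ (k + 1)) * hAgeo k hk
      - (u * eL) * h2 - ((-1 : K) ^ (k * M) * eL ^ (k + 1) * Av k) * huL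
  · -- C geometric
    intro k hk
    obtain ⟨d, rfl⟩ : ∃ d, l = k + d := ⟨l - k, by omega⟩
    have h1 := hCkey d (by omega)
    have h2 := hCkey (d + 1) (by omega)
    rw [show k + d + 1 - d = k + 1 from by omega] at h1
    rw [show k + d + 1 - (d + 1) = k from by omega] at h2
    rw [div_mul_eq_mul_div, eq_div_iff heRne]
    apply mul_left_cancel₀ (pow_ne_zero d hune)
    linear_combination eR * h1 - h2
  · -- D geometric
    intro k hk
    obtain ⟨d, rfl⟩ : ∃ d, l = k + d := ⟨l - k, by omega⟩
    have h1 := hDkey (k + 1) (by omega)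
    have h2 := hDkey k (by omega)
    rw [show k + d + 1 - (k + 1) = d from by omega] at h1
    rw [show k + d + 1 - k = d + 1 from by omega] at h2
    have hsgn : (-1 : K) ^ ((k + 1) * (M + d)) = (-1) ^ ((M + (k + d)) + k * (M + (d + 1))) := by
      rw [show (M + (k + d)) + k * (M + (d + 1)) = (k + 1) * (M + d) + 2 * k from by ring,
        NWA.neg_one_pow_add_two_mul]
    rw [hsgn, pow_add] at h1
    rw [div_mul_eq_mul_div, eq_div_iff heRne]
    apply mul_left_cancel₀ (pow_ne_zero (k + d + 1) hune)
    linear_combination eR * h1 - ((-1 : K) ^ (M + (k + d)) * eL) * h2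
  · -- the frame ratio identity
    have hQR : eL / Av 1 * (u / eR) ≠ 0 :=
      mul_ne_zero (div_ne_zero heLne (hAvne 1 (by omega))) (div_ne_zero hune heRne)
    rw [div_eq_iff hQR, huL, pow_add]
    field_simp
end

section
/- The second-level Paperfolding sequence (Π^{(2)}_i)_{i≥1}, with values in {0,1,2,3}, equals the image under the coding υ (υ(A)=0, υ(B)=0, υ(C)=1, υ(D)=0, υ(E)=2, υ(F)=1, υ(G)=3, υ(H)=2, υ(I)=1, υ(J)=3, υ(K)=2, υ(L)=3) of the fixed point starting from A of the 2-morphism χ on {A,…,L} given by χ(A)=AB, χ(B)=CD, χ(C)=EF, χ(D)=GD, χ(E)=AH, χ(F)=CI, χ(G)=EJ, χ(H)=CK, χ(I)=GI, χ(J)=CL, χ(K)=GK, χ(L)=GL. -/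
/-- The `n`-th level Paperfolding sequence. -/
def paperfolding (n i : ℕ) : ℕ :=
  ((i / 2 ^ (padicValNat 2 i)) % 2 ^ (n + 1) - 1) / 2

/-- The 12-letter alphabet `{A, …, L}`. -/
inductive Λ | A | B | C | D | E | F | G | H | I | J | K | L
  deriving DecidableEq

open Λ in
/-- The uniform 2-morphism `χ`. -/
def χ : Λ → List Λ
  | A => [A, B]
  | B => [C, D]
  | C => [E, F]
  | D => [G, D]
  | E => [A, H]
  | F => [C, I]
  | G => [E, J]
  | H => [C, K]
  | I => [G, I]
  | J => [C, L]
  | K => [G, K]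
  | L => [G, L]

open Λ in
/-- The coding `υ`. -/
def υ : Λ → ℕ
  | A => 0
  | B => 0
  | C => 1
  | D => 0
  | E => 2
  | F => 1
  | G => 3
  | H => 2
  | I => 1
  | J => 3
  | K => 2
  | L => 3

/-!
Each letter `ℓ` of `χ` stands for a pair `(υ ℓ, ℓ.residue) ∈ {0,1,2,3}²`, and the letter at
position `j` of the fixed point is the one for `(Π_{j+1}, j mod 4)`. This is preserved by `χ`
because `Π_{2j+1} = j mod 4` and `Π_{2j+2} = Π_{j+1}`.
-/

theorem Nat.two_mul_add_one_mod_two_mul (j : ℕ) {m : ℕ} (hm : 0 < m) :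
    (2 * j + 1) % (2 * m) = 2 * (j % m) + 1 := by
  have hj : 2 * j + 1 = j / m * (2 * m) + (2 * (j % m) + 1) := by
    linarith [Nat.div_add_mod j m]
  rw [hj, Nat.mul_add_mod_of_lt (by have := Nat.mod_lt j hm; omega)]

theorem paperfolding_two_mul_add_one (n j : ℕ) : paperfolding n (2 * j + 1) = j % 2 ^ n := by
  have hv : padicValNat 2 (2 * j + 1) = 0 := padicValNat.eq_zero_of_not_dvd (by omega)
  rw [paperfolding, hv, pow_zero, Nat.div_one, pow_succ',
    Nat.two_mul_add_one_mod_two_mul j (by positivity)]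
  omega

theorem paperfolding_two_mul (n i : ℕ) : paperfolding n (2 * i) = paperfolding n i := by
  rcases Nat.eq_zero_or_pos i with rfl | hi
  · rfl
  have hv : padicValNat 2 (2 * i) = padicValNat 2 i + 1 := by
    rw [padicValNat.mul two_ne_zero hi.ne', padicValNat_self, add_comm]
  rw [paperfolding, paperfolding, hv, pow_succ', Nat.mul_div_mul_left _ _ two_pos]

open Λ in
/-- The residue mod 4 of every position at which the letter occurs in the fixed point of `χ`. -/
def Λ.residue : Λ → ℕ
  | A => 0 | B => 1 | C => 2 | D => 3 | E => 0 | F => 1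
  | G => 2 | H => 1 | I => 3 | J => 1 | K => 3 | L => 3

def Λ.Tracks (j : ℕ) (ℓ : Λ) : Prop :=
  υ ℓ = paperfolding 2 (j + 1) ∧ ℓ.residue = j % 4

theorem exists_χ_eq_residue_υ (ℓ : Λ) :
    ∃ a b, χ ℓ = [a, b] ∧ υ a = ℓ.residue ∧ a.residue = 2 * ℓ.residue % 4 ∧
      υ b = υ ℓ ∧ b.residue = (2 * ℓ.residue + 1) % 4 := by
  cases ℓ <;> exact ⟨_, _, rfl, by decide⟩

theorem Λ.Tracks.χ {j : ℕ} {ℓ a b : Λ} (hℓ : ℓ.Tracks j) (hχ : χ ℓ = [a, b]) :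
    a.Tracks (2 * j) ∧ b.Tracks (2 * j + 1) := by
  obtain ⟨a', b', hχ', ha, ha', hb, hb'⟩ := exists_χ_eq_residue_υ ℓ
  obtain ⟨rfl, rfl⟩ : a = a' ∧ b = b' := by simpa [hχ] using hχ'
  refine ⟨⟨?_, ?_⟩, ⟨?_, ?_⟩⟩
  · rw [ha, paperfolding_two_mul_add_one, hℓ.2]
    rfl
  · rw [ha', hℓ.2]; omega
  · rw [hb, hℓ.1, show 2 * j + 1 + 1 = 2 * (j + 1) by ring, paperfolding_two_mul]
  · rw [hb', hℓ.2]; omega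

/-- The second-level Paperfolding sequence equals the image under the coding `υ`
of the fixed point of `χ` starting from `A`. -/
theorem paperfolding_two_automatic (f : ℕ → Λ) (h0 : f 0 = Λ.A)
    (hfix : ∀ j : ℕ, χ (f j) = [f (2 * j), f (2 * j + 1)]) :
    ∀ j : ℕ, paperfolding 2 (j + 1) = υ (f j) := by
  have htracks : ∀ j, (f j).Tracks j := by
    intro j
    induction j using Nat.evenOddRec with
    | h0 => rw [h0]; exact ⟨by simp [paperfolding, υ], rfl⟩
    | h_even n ih => exact (ih.χ (hfix n)).1
    | h_odd n ih => exact (ih.χ (hfix n)).2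
  exact fun j => (htracks j).1.symm
end
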